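/- arXiv:1806.04664 — 4 statements merged into one kernel-verified Lean document; each statement's English description precedes it below -/
import Mathlib

section
/- Let N ≥ 1 and let f, g : [0, π] → ℝ^N be C¹ maps. For ρ ∈ (0, 1/2], define the linear interpolation map w on the half annulus {(r, θ) : 1 − ρ ≤ r ≤ 1, 0 ≤ θ ≤ π} (in polar coordinates) by w(r, θ) = f(θ) + ((r − (1 − ρ))/ρ)(g(θ) − f(θ)), so that w(1 − ρ, θ) = f(θ) and w(1, θ) = g(θ). Then the energy of w satisfies E(w) = ∫_{1−ρ}^{1} ∫_0^π (|∂_r w|² + r^{−2}|∂_θ w|²) r dθ dr ≤ ρ^{−1} ∫_0^π |f(θ) − g(θ)|² dθ + 4ρ ∫_0^π (|f'(θ)|² + |g'(θ)|²) dθ. (Energy bound for the linear interpolation band, the Euclidean core of the interpolation Lemmas 7.2 and 7.3.) -/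
open MeasureTheory Set

/-
On the band `1 - ρ ≤ r ≤ 1` the radial derivative of the interpolation is `(g - f) / ρ` and the
angular derivative `f' + c (g' - f')` with `c ∈ [0, 1]`, so `|∂_θ w|² ≤ 2|f'|² + 2|g'|²`; since
`1/2 ≤ r ≤ 1`, the weighted energy density is at most `ρ⁻²|f - g|² + 4(|f'|² + |g'|²)` for every
`r`, and integrating over a band of width `ρ` gives the bound.
-/

-- A nonintegrable `f` has integral `0`, which `0 ≤ f ≤ g` still bounds by `∫ g`.
lemma intervalIntegral.integral_mono_on_Ioo_of_nonneg {f g : ℝ → ℝ} {a b : ℝ} (hab : a ≤ b)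
    (hf : ∀ x ∈ Ioo a b, 0 ≤ f x) (hg : IntervalIntegrable g volume a b)
    (h : ∀ x ∈ Ioo a b, f x ≤ g x) :
    ∫ x in a..b, f x ≤ ∫ x in a..b, g x := by
  simp only [intervalIntegral.integral_of_le hab, integral_Ioc_eq_integral_Ioo]
  exact integral_mono_of_nonneg (ae_restrict_of_forall_mem measurableSet_Ioo hf)
    (hg.1.mono_set Ioo_subset_Ioc_self) (ae_restrict_of_forall_mem measurableSet_Ioo h)

section Interpolation

variable {E : Type*} [NormedAddCommGroup E] [NormedSpace ℝ E]

lemma DifferentiableOn.hasDerivAt_derivWithin_Icc {f : ℝ → E} {a b x : ℝ}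
    (hf : DifferentiableOn ℝ f (Icc a b)) (hx : x ∈ Ioo a b) :
    HasDerivAt f (derivWithin f (Icc a b) x) x :=
  (hf x (Ioo_subset_Icc_self hx)).hasDerivWithinAt.hasDerivAt (Icc_mem_nhds hx.1 hx.2)

lemma hasFDerivAt_interpolation {f g : ℝ → E} {f' g' : E} {θ : ℝ} (hf : HasDerivAt f f' θ)
    (hg : HasDerivAt g g' θ) (s ρ r : ℝ) :
    HasFDerivAt (fun p : ℝ × ℝ => f p.2 + ((p.1 - s) / ρ) • (g p.2 - f p.2))
      ((ContinuousLinearMap.fst ℝ ℝ ℝ).smulRight (ρ⁻¹ • (g θ - f θ)) +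
        (ContinuousLinearMap.snd ℝ ℝ ℝ).smulRight (f' + ((r - s) / ρ) • (g' - f'))) (r, θ) := by
  have hsnd : HasFDerivAt (Prod.snd : ℝ × ℝ → ℝ) (ContinuousLinearMap.snd ℝ ℝ ℝ) (r, θ) :=
    hasFDerivAt_snd
  have hf₂ := hf.hasFDerivAt.comp (r, θ) hsnd
  have hg₂ := hg.hasFDerivAt.comp (r, θ) hsnd
  have hc : HasFDerivAt (fun p : ℝ × ℝ => (p.1 - s) / ρ)
      (ρ⁻¹ • ContinuousLinearMap.fst ℝ ℝ ℝ) (r, θ) := by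
    simpa [div_eq_inv_mul] using (hasFDerivAt_fst.sub_const s).const_mul ρ⁻¹
  refine (hf₂.add (hc.smul (hg₂.sub hf₂))).congr_fderiv ?_
  ext <;> simp

lemma norm_add_smul_sub_sq_le (u v : E) {c : ℝ} (hc₀ : 0 ≤ c) (hc₁ : c ≤ 1) :
    ‖u + c • (v - u)‖ ^ 2 ≤ 2 * (‖u‖ ^ 2 + ‖v‖ ^ 2) := by
  have hconv : ‖u + c • (v - u)‖ ≤ (1 - c) * ‖u‖ + c * ‖v‖ := by
    rw [show u + c • (v - u) = (1 - c) • u + c • v by module]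
    refine (norm_add_le _ _).trans_eq ?_
    rw [norm_smul, norm_smul, Real.norm_of_nonneg (sub_nonneg.2 hc₁), Real.norm_of_nonneg hc₀]
  have hle : ‖u + c • (v - u)‖ ≤ ‖u‖ + ‖v‖ :=
    hconv.trans (by nlinarith [norm_nonneg u, norm_nonneg v])
  nlinarith [norm_nonneg (u + c • (v - u)), sq_nonneg (‖u‖ - ‖v‖)]

lemma interpolation_energy_density_le (d u v : E) {ρ r : ℝ} (hρ₀ : 0 < ρ) (hρ : ρ ≤ 1 / 2)
    (hr : r ∈ Icc (1 - ρ) 1) :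
    (‖ρ⁻¹ • d‖ ^ 2 + 1 / r ^ 2 * ‖u + ((r - (1 - ρ)) / ρ) • (v - u)‖ ^ 2) * r ≤
      ρ⁻¹ ^ 2 * ‖d‖ ^ 2 + 4 * (‖u‖ ^ 2 + ‖v‖ ^ 2) := by
  obtain ⟨hr₀, hr₁⟩ := hr
  have hr : 0 < r := by linarith
  have hc₀ : 0 ≤ (r - (1 - ρ)) / ρ := div_nonneg (by linarith) hρ₀.le
  have hc₁ : (r - (1 - ρ)) / ρ ≤ 1 := (div_le_one hρ₀).2 (by linarith)
  have hang := norm_add_smul_sub_sq_le u v hc₀ hc₁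
  set X := ‖u + ((r - (1 - ρ)) / ρ) • (v - u)‖ ^ 2
  have hrad : ‖ρ⁻¹ • d‖ ^ 2 * r ≤ ρ⁻¹ ^ 2 * ‖d‖ ^ 2 := by
    rw [norm_smul, mul_pow, Real.norm_eq_abs, sq_abs]
    exact mul_le_of_le_one_right (by positivity) hr₁
  have hinv : 1 / r ≤ 2 := by rw [div_le_iff₀ hr]; linarith
  have hX : 1 / r ^ 2 * X * r ≤ 2 * X := by
    rw [show 1 / r ^ 2 * X * r = X * (1 / r) by field_simp]
    linarith [mul_le_mul_of_nonneg_left hinv (show 0 ≤ X by positivity)]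
  nlinarith

lemma interpolation_energy_density_le_of_hasDerivAt {f g : ℝ → E} {f' g' : E} {θ ρ r : ℝ}
    (hf : HasDerivAt f f' θ) (hg : HasDerivAt g g' θ) (hρ₀ : 0 < ρ) (hρ : ρ ≤ 1 / 2)
    (hr : r ∈ Icc (1 - ρ) 1) :
    let w := fun p : ℝ × ℝ => f p.2 + ((p.1 - (1 - ρ)) / ρ) • (g p.2 - f p.2)
    (‖fderiv ℝ w (r, θ) (1, 0)‖ ^ 2 + 1 / r ^ 2 * ‖fderiv ℝ w (r, θ) (0, 1)‖ ^ 2) * r ≤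
      ρ⁻¹ ^ 2 * ‖f θ - g θ‖ ^ 2 + 4 * (‖f'‖ ^ 2 + ‖g'‖ ^ 2) := by
  intro w
  rw [(hasFDerivAt_interpolation hf hg (1 - ρ) ρ r).fderiv, norm_sub_rev (f θ)]
  simpa using interpolation_energy_density_le (g θ - f θ) f' g' hρ₀ hρ hr

end Interpolation

theorem stmt_5_general (N : ℕ)
    (f g : ℝ → EuclideanSpace ℝ (Fin N))
    (hf : ContDiffOn ℝ 1 f (Set.Icc 0 Real.pi))
    (hg : ContDiffOn ℝ 1 g (Set.Icc 0 Real.pi))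
    (ρ : ℝ) (hρ0 : 0 < ρ) (hρ : ρ ≤ 1 / 2)
    (w : ℝ × ℝ → EuclideanSpace ℝ (Fin N))
    (hw : ∀ r θ : ℝ, w (r, θ) = f θ + ((r - (1 - ρ)) / ρ) • (g θ - f θ)) :
    (∫ r in (1 - ρ : ℝ)..1, ∫ θ in (0 : ℝ)..Real.pi,
        (‖fderiv ℝ w (r, θ) ((1 : ℝ), (0 : ℝ))‖ ^ 2
          + (1 / r ^ 2) * ‖fderiv ℝ w (r, θ) ((0 : ℝ), (1 : ℝ))‖ ^ 2) * r) ≤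
      ρ⁻¹ * (∫ θ in (0 : ℝ)..Real.pi, ‖f θ - g θ‖ ^ 2) +
        4 * ρ * ∫ θ in (0 : ℝ)..Real.pi,
          (‖derivWithin f (Set.Icc 0 Real.pi) θ‖ ^ 2
            + ‖derivWithin g (Set.Icc 0 Real.pi) θ‖ ^ 2) := by
  obtain rfl : w = fun p => f p.2 + ((p.1 - (1 - ρ)) / ρ) • (g p.2 - f p.2) :=
    funext fun p => hw p.1 p.2
  set f' := derivWithin f (Icc 0 Real.pi)
  set g' := derivWithin g (Icc 0 Real.pi)
  have hπ := Real.pi_pos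
  have hS := uniqueDiffOn_Icc hπ
  have hA : IntervalIntegrable (fun θ => ‖f θ - g θ‖ ^ 2) volume 0 Real.pi :=
    ((hf.continuousOn.sub hg.continuousOn).norm.pow 2).intervalIntegrable_of_Icc hπ.le
  have hB : IntervalIntegrable (fun θ => ‖f' θ‖ ^ 2 + ‖g' θ‖ ^ 2) volume 0 Real.pi :=
    (((hf.continuousOn_derivWithin hS le_rfl).norm.pow 2).add
      ((hg.continuousOn_derivWithin hS le_rfl).norm.pow 2)).intervalIntegrable_of_Icc hπ.le
  calc _ ≤ ∫ _ in (1 - ρ)..1, ∫ θ in (0 : ℝ)..Real.pi,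
        ρ⁻¹ ^ 2 * ‖f θ - g θ‖ ^ 2 + 4 * (‖f' θ‖ ^ 2 + ‖g' θ‖ ^ 2) := by
        refine intervalIntegral.integral_mono_on_Ioo_of_nonneg (by linarith)
          (fun r hr => ?_) intervalIntegrable_const (fun r hr => ?_)
        · exact intervalIntegral.integral_nonneg hπ.le fun θ _ =>
            mul_nonneg (by positivity) (by linarith [hr.1])
        refine intervalIntegral.integral_mono_on_Ioo_of_nonneg hπ.le
          (fun θ _ => mul_nonneg (by positivity) (by linarith [hr.1]))
          ((hA.const_mul _).add (hB.const_mul 4)) (fun θ hθ => ?_)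
        exact interpolation_energy_density_le_of_hasDerivAt
          ((hf.differentiableOn one_ne_zero).hasDerivAt_derivWithin_Icc hθ)
          ((hg.differentiableOn one_ne_zero).hasDerivAt_derivWithin_Icc hθ) hρ0 hρ
          (Ioo_subset_Icc_self hr)
    _ = ρ⁻¹ * (∫ θ in (0 : ℝ)..Real.pi, ‖f θ - g θ‖ ^ 2) +
          4 * ρ * ∫ θ in (0 : ℝ)..Real.pi, (‖f' θ‖ ^ 2 + ‖g' θ‖ ^ 2) := by
        rw [intervalIntegral.integral_const, intervalIntegral.integral_add (hA.const_mul _)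
          (hB.const_mul 4), intervalIntegral.integral_const_mul,
          intervalIntegral.integral_const_mul, smul_eq_mul]
        field_simp
        ring

/-- Energy bound for the linear interpolation band (the Euclidean core of Lemmas 7.2 and 7.3):
for `C¹` maps `f, g : [0,π] → ℝ^N` and `ρ ∈ (0, 1/2]`, the linear interpolation
`w(r,θ) = f(θ) + ((r − (1 − ρ))/ρ)(g(θ) − f(θ))` on the half annulus
`{1 − ρ ≤ r ≤ 1, 0 ≤ θ ≤ π}` has energy
`E(w) = ∫_{1−ρ}^1 ∫_0^π (|∂_r w|² + r^{−2}|∂_θ w|²) r ≤ ρ^{−1}∫|f − g|² + 4ρ∫(|f'|² + |g'|²)`. -/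
theorem stmt_5 (N : ℕ) (hN : 1 ≤ N)
    (f g : ℝ → EuclideanSpace ℝ (Fin N))
    (hf : ContDiffOn ℝ 1 f (Set.Icc 0 Real.pi))
    (hg : ContDiffOn ℝ 1 g (Set.Icc 0 Real.pi))
    (ρ : ℝ) (hρ0 : 0 < ρ) (hρ : ρ ≤ 1 / 2)
    (w : ℝ × ℝ → EuclideanSpace ℝ (Fin N))
    (hw : ∀ r θ : ℝ, w (r, θ) = f θ + ((r - (1 - ρ)) / ρ) • (g θ - f θ)) :
    (∫ r in (1 - ρ : ℝ)..1, ∫ θ in (0 : ℝ)..Real.pi,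
        (‖fderiv ℝ w (r, θ) ((1 : ℝ), (0 : ℝ))‖ ^ 2
          + (1 / r ^ 2) * ‖fderiv ℝ w (r, θ) ((0 : ℝ), (1 : ℝ))‖ ^ 2) * r) ≤
      ρ⁻¹ * (∫ θ in (0 : ℝ)..Real.pi, ‖f θ - g θ‖ ^ 2) +
        4 * ρ * ∫ θ in (0 : ℝ)..Real.pi,
          (‖derivWithin f (Set.Icc 0 Real.pi) θ‖ ^ 2
            + ‖derivWithin g (Set.Icc 0 Real.pi) θ‖ ^ 2) :=
  stmt_5_general N f g hf hg ρ hρ0 hρ w hw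
end

section
/- Let l > 0 and let 0 ≤ k ≤ n be integers. Let u = (u¹, …, uⁿ) : [−3l, 3l] × [0, π] → ℝⁿ be a map that is smooth on the closed half cylinder, harmonic (i.e. ∂_t² u + ∂_θ² u = 0 componentwise), and satisfies the Euclidean free boundary conditions relative to ℝᵏ ⊂ ℝⁿ: for all t and for θ ∈ {0, π}, the components u^{k+1}(t, θ) = ⋯ = uⁿ(t, θ) = 0 and ∂_θ u¹(t, θ) = ⋯ = ∂_θ uᵏ(t, θ) = 0. Then the angular energy f(t) = ∫_0^π |∂_θ u(t, θ)|² dθ satisfies f''(t) ≥ 2 f(t) for all t ∈ (−3l, 3l). (Euclidean case of the angular-energy differential inequality, Lemma 8.1.) -/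
open MeasureTheory

open Real intervalIntegral Set


lemma myCS (f g : ℝ → ℝ) (hf : ContinuousOn f (Icc 0 π)) (hg : ContinuousOn g (Icc 0 π)) :
    (∫ x in (0:ℝ)..π, f x * g x) ^ 2 ≤ (∫ x in (0:ℝ)..π, f x ^ 2) * (∫ x in (0:ℝ)..π, g x ^ 2) := by
  have hπ : (0:ℝ) ≤ π := pi_pos.le
  have hsub : Set.uIcc (0:ℝ) π ⊆ Icc 0 π := by rw [Set.uIcc_of_le hπ]
  have If : IntervalIntegrable (fun x => f x ^ 2) volume 0 π :=
    ((hf.mono hsub).pow 2).intervalIntegrable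
  have Ig : IntervalIntegrable (fun x => g x ^ 2) volume 0 π :=
    ((hg.mono hsub).pow 2).intervalIntegrable
  have Ifg : IntervalIntegrable (fun x => f x * g x) volume 0 π :=
    ((hf.mono hsub).mul (hg.mono hsub)).intervalIntegrable
  set A := ∫ x in (0:ℝ)..π, f x ^ 2 with hA
  set B := ∫ x in (0:ℝ)..π, f x * g x with hB
  set C := ∫ x in (0:ℝ)..π, g x ^ 2 with hC
  have key : ∀ lam : ℝ, 0 ≤ A - 2 * lam * B + lam ^ 2 * C := by
    intro lam
    have h1 : (0:ℝ) ≤ ∫ x in (0:ℝ)..π, (f x - lam * g x) ^ 2 := by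
      apply intervalIntegral.integral_nonneg hπ
      intro x _; positivity
    have h2 : ∫ x in (0:ℝ)..π, (f x - lam * g x) ^ 2
        = A - 2 * lam * B + lam ^ 2 * C := by
      have e : (fun x => (f x - lam * g x) ^ 2)
          = fun x => (f x ^ 2 - 2 * lam * (f x * g x)) + lam ^ 2 * (g x ^ 2) := by
        funext x; ring
      rw [e, intervalIntegral.integral_add (If.sub (Ifg.const_mul _)) (Ig.const_mul _),
        intervalIntegral.integral_sub If (Ifg.const_mul _),
        intervalIntegral.integral_const_mul, intervalIntegral.integral_const_mul]
    linarith [h2 ▸ h1]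
  have hC0 : 0 ≤ C := intervalIntegral.integral_nonneg hπ (fun x _ => by positivity)
  have hA0 : 0 ≤ A := intervalIntegral.integral_nonneg hπ (fun x _ => by positivity)
  rcases eq_or_lt_of_le hC0 with h | h
  · -- C = 0, show B = 0
    have hB0 : B = 0 := by
      by_contra hne
      have := key ((A + 1) / (2 * B))
      rw [← h] at this
      have h2 : 2 * ((A + 1) / (2 * B)) * B = A + 1 := by field_simp
      nlinarith
    rw [hB0, ← h]; simp
  · have h3 := key (B / C)
    have hC' : C ≠ 0 := ne_of_gt h
    have h5 : (A - 2 * (B / C) * B + (B / C) ^ 2 * C) * C = A * C - B ^ 2 := by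
      field_simp; ring
    nlinarith

set_option maxHeartbeats 1000000 in
lemma wirtinger (g g' : ℝ → ℝ) (hg : ∀ x ∈ Icc 0 π, HasDerivAt g (g' x) x)
    (hg' : ContinuousOn g' (Icc 0 π)) (h0 : g 0 = 0) (hpi : g π = 0) :
    ∫ x in (0:ℝ)..π, g x ^ 2 ≤ ∫ x in (0:ℝ)..π, g' x ^ 2 := by
  have pi_pos := Real.pi_pos
  have hgc : ContinuousOn g (Icc 0 π) := fun x hx => (hg x hx).continuousAt.continuousWithinAt
  have hsub : Set.uIcc (0:ℝ) π ⊆ Icc 0 π := by rw [Set.uIcc_of_le pi_pos.le]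
  -- bound on g'
  obtain ⟨M0, hM0⟩ := isCompact_Icc.exists_bound_of_continuousOn hg'
  set M := max M0 0 with hM
  have hMnn : 0 ≤ M := le_max_right _ _
  have hM' : ∀ x ∈ Icc 0 π, |g' x| ≤ M := fun x hx => le_trans (hM0 x hx) (le_max_left _ _)
  -- h = g'^2 - g^2 and its bound
  set h : ℝ → ℝ := fun x => g' x ^ 2 - g x ^ 2 with hh
  have hhc : ContinuousOn h (Icc 0 π) := (hg'.pow 2).sub (hgc.pow 2)
  obtain ⟨C0, hC0⟩ := isCompact_Icc.exists_bound_of_continuousOn hhc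
  set C := max C0 0 with hCdef
  have hCnn : 0 ≤ C := le_max_right _ _
  have hC : ∀ x ∈ Icc 0 π, |h x| ≤ C := fun x hx => le_trans (hC0 x hx) (le_max_left _ _)
  have hInt : ∀ a b : ℝ, a ∈ Icc 0 π → b ∈ Icc 0 π → IntervalIntegrable h volume a b := by
    intro a b ha hb
    exact (hhc.mono (Set.uIcc_subset_Icc ha hb)).intervalIntegrable
  -- Lipschitz bounds from both ends
  have lipL : ∀ x ∈ Icc 0 π, |g x| ≤ M * x := by
    intro x hx
    have := norm_image_sub_le_of_norm_deriv_le_segment'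
      (f := g) (f' := g') (a := 0) (b := π)
      (fun y hy => (hg y hy).hasDerivWithinAt)
      (fun y hy => by simpa using hM' y ⟨hy.1, hy.2.le⟩) x hx
    simpa [h0] using this
  have lipR : ∀ x ∈ Icc 0 π, |g x| ≤ M * (π - x) := by
    intro x hx
    have key := norm_image_sub_le_of_norm_deriv_le_segment'
      (f := g) (f' := g') (a := x) (b := π)
      (fun y hy => (hg y ⟨le_trans hx.1 hy.1, hy.2⟩).hasDerivWithinAt)
      (fun y hy => by simpa using hM' y ⟨le_trans hx.1 hy.1, hy.2.le⟩) π
      ⟨hx.2, le_refl _⟩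
    rw [hpi] at key
    simpa [abs_sub_comm] using key
  -- key estimate for small ε
  have main : ∀ ε : ℝ, 0 < ε → ε ≤ 1 → ε < π/2 →
      -((4 * M^2 + 2 * C) * ε) ≤ ∫ x in (0:ℝ)..π, h x := by
    intro ε hε hε1 hε2
    have hεπ : ε ≤ π - ε := by linarith
    have hεIcc : ε ∈ Icc (0:ℝ) π := ⟨hε.le, by linarith⟩
    have hπεIcc : (π - ε) ∈ Icc (0:ℝ) π := ⟨by linarith, by linarith⟩
    have hIccsub : Icc ε (π - ε) ⊆ Icc 0 π := Icc_subset_Icc hε.le (by linarith)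
    -- split the integral
    have split : ∫ x in (0:ℝ)..π, h x
        = (∫ x in (0:ℝ)..ε, h x) + (∫ x in ε..(π-ε), h x) + (∫ x in (π-ε)..π, h x) := by
      rw [integral_add_adjacent_intervals (hInt 0 ε ⟨le_refl _, by linarith⟩ hεIcc)
        (hInt ε (π-ε) hεIcc hπεIcc),
        integral_add_adjacent_intervals (hInt 0 (π-ε) ⟨le_refl _, by linarith⟩ hπεIcc)
        (hInt (π-ε) π hπεIcc ⟨pi_pos.le, le_refl _⟩)]
    -- tails
    have tail1 : |∫ x in (0:ℝ)..ε, h x| ≤ C * ε := by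
      have := intervalIntegral.norm_integral_le_of_norm_le_const (C := C) (f := h)
        (a := 0) (b := ε) (fun x hx => by
          rw [Set.uIoc_of_le hε.le] at hx
          exact hC x ⟨hx.1.le, le_trans hx.2 (by linarith)⟩)
      simpa [abs_of_pos hε] using this
    have tail2 : |∫ x in (π-ε)..π, h x| ≤ C * ε := by
      have := intervalIntegral.norm_integral_le_of_norm_le_const (C := C) (f := h)
        (a := π - ε) (b := π) (fun x hx => by
          rw [Set.uIoc_of_le (by linarith : π - ε ≤ π)] at hx
          exact hC x ⟨by linarith [hx.1], hx.2⟩)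
      simpa [abs_of_pos hε, abs_of_nonneg (by linarith : (0:ℝ) ≤ π - (π - ε))] using this
    -- middle: derivative identity
    set φ : ℝ → ℝ := fun x => g x ^ 2 * (Real.cos x / Real.sin x) with hφ
    set D : ℝ → ℝ := fun x => h x - (g' x - g x * (Real.cos x / Real.sin x)) ^ 2 with hD
    have hderiv : ∀ x ∈ Set.uIcc ε (π - ε), HasDerivAt φ (D x) x := by
      intro x hx
      rw [Set.uIcc_of_le hεπ] at hx
      have hxI : x ∈ Icc 0 π := hIccsub hx
      have hsin : Real.sin x ≠ 0 := by
        have : 0 < Real.sin x := Real.sin_pos_of_pos_of_lt_pi (by linarith [hx.1]) (by linarith [hx.2])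
        exact ne_of_gt this
      have h1 : HasDerivAt (fun y => g y ^ 2) (2 * g x * g' x) x := by
        have := (hg x hxI).pow 2
        refine this.congr_deriv ?_
        simp
      have h2 : HasDerivAt (fun y => Real.cos y / Real.sin y)
          ((-Real.sin x * Real.sin x - Real.cos x * Real.cos x) / Real.sin x ^ 2) x :=
        (Real.hasDerivAt_cos x).div (Real.hasDerivAt_sin x) hsin
      have h3 := h1.mul h2
      refine h3.congr_deriv (Eq.symm ?_)
      have hs := Real.sin_sq_add_cos_sq x
      simp only [hD, hh]
      field_simp [hD, hh]
      nlinarith [hs, sq_nonneg (Real.sin x), sq_nonneg (Real.cos x)]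
    -- FTC on the middle interval
    have hDc : ContinuousOn D (Icc ε (π - ε)) := by
      have hsin : ∀ x ∈ Icc ε (π - ε), Real.sin x ≠ 0 := fun x hx =>
        ne_of_gt (Real.sin_pos_of_pos_of_lt_pi (by linarith [hx.1]) (by linarith [hx.2]))
      have hcot : ContinuousOn (fun x => Real.cos x / Real.sin x) (Icc ε (π - ε)) :=
        (Real.continuous_cos.continuousOn).div (Real.continuous_sin.continuousOn) hsin
      exact ((hhc.mono hIccsub).sub
        (((hg'.mono hIccsub).sub ((hgc.mono hIccsub).mul hcot)).pow 2))
    have hDint : IntervalIntegrable D volume ε (π - ε) :=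
      (hDc.mono (by rw [Set.uIcc_of_le hεπ])).intervalIntegrable
    have ftc : ∫ x in ε..(π-ε), D x = φ (π - ε) - φ ε :=
      integral_eq_sub_of_hasDerivAt hderiv hDint
    have hmid : φ (π - ε) - φ ε ≤ ∫ x in ε..(π-ε), h x := by
      have hnn : 0 ≤ ∫ x in ε..(π-ε), (h x - D x) :=
        intervalIntegral.integral_nonneg hεπ (fun x hx => by simp [hD]; positivity)
      have := intervalIntegral.integral_sub (hInt ε (π-ε) hεIcc hπεIcc) hDint
      rw [this] at hnn
      linarith [ftc ▸ hnn]
    -- bounds on φ at the two ends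
    have bnd : ∀ x ∈ Icc (0:ℝ) π, |g x| ≤ M * ε → 2 / π * ε ≤ Real.sin x →
        |φ x| ≤ 2 * M ^ 2 * ε := by
      intro x hx hgx hsx
      have hs' : 0 < Real.sin x := lt_of_lt_of_le (by positivity) hsx
      have e1 : |φ x| ≤ (M * ε) ^ 2 * (1 / Real.sin x) := by
        rw [hφ]
        simp only [abs_mul]
        apply mul_le_mul
        · rw [abs_of_nonneg (sq_nonneg (g x)), ← sq_abs (g x)]
          exact pow_le_pow_left₀ (abs_nonneg _) hgx 2
        · rw [abs_div, abs_of_pos hs']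
          exact (div_le_div_iff_of_pos_right hs').mpr (Real.abs_cos_le_one x)
        · positivity
        · positivity
      have e2 : 1 / Real.sin x ≤ π / (2 * ε) := by
        rw [div_le_div_iff₀ hs' (by positivity)]
        have h6 := mul_le_mul_of_nonneg_left hsx pi_pos.le
        have heq : π * (2 / π * ε) = 2 * ε := by field_simp
        nlinarith
      have e3 : (M * ε) ^ 2 * (1 / Real.sin x) ≤ (M * ε) ^ 2 * (π / (2 * ε)) := by
        apply mul_le_mul_of_nonneg_left e2 (by positivity)
      have e4 : (M * ε) ^ 2 * (π / (2 * ε)) ≤ 2 * M ^ 2 * ε := by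
        have : (M * ε) ^ 2 * (π / (2 * ε)) = M ^ 2 * ε * (π / 2) := by
          field_simp
        rw [this]
        nlinarith [Real.pi_le_four, sq_nonneg M, hε.le, mul_nonneg (sq_nonneg M) hε.le]
      linarith
    have hsinε : 2 / π * ε ≤ Real.sin ε := Real.mul_le_sin hε.le hε2.le
    have bε : |φ ε| ≤ 2 * M ^ 2 * ε := by
      apply bnd ε hεIcc _ hsinε
      simpa using lipL ε hεIcc
    have bπε : |φ (π - ε)| ≤ 2 * M ^ 2 * ε := by
      apply bnd (π - ε) hπεIcc
      · have := lipR (π - ε) hπεIcc; simpa using this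
      · rw [Real.sin_pi_sub]; exact hsinε
    rw [split]
    have t1 := (abs_le.mp tail1).1
    have t2 := (abs_le.mp tail2).1
    have p1 := (abs_le.mp bε).2
    have p2 := (abs_le.mp bπε).1
    have expand : (4 * M ^ 2 + 2 * C) * ε = 4 * (M ^ 2 * ε) + 2 * (C * ε) := by ring
    have p1' : 2 * M ^ 2 * ε = 2 * (M ^ 2 * ε) := by ring
    rw [expand]; rw [p1'] at p1 p2
    linarith
  -- conclude nonnegativity of ∫ h
  have hI : 0 ≤ ∫ x in (0:ℝ)..π, h x := by
    by_contra hneg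
    push_neg at hneg
    set I := ∫ x in (0:ℝ)..π, h x with hIdef
    set K := 4 * M ^ 2 + 2 * C with hK
    have hKnn : 0 ≤ K := by positivity
    set ε := min (min 1 (π/4)) (-I / (K + 1)) with hε
    have hεpos : 0 < ε := by
      apply lt_min (lt_min one_pos (by positivity))
      apply div_pos (by linarith) (by linarith)
    have h1 : ε ≤ 1 := le_trans (min_le_left _ _) (min_le_left _ _)
    have h2 : ε < π / 2 := lt_of_le_of_lt (le_trans (min_le_left _ _) (min_le_right _ _)) (by linarith)
    have h3 : ε ≤ -I / (K + 1) := min_le_right _ _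
    have h4 := main ε hεpos h1 h2
    have h5 : (K + 1) * ε ≤ -I := by
      rw [le_div_iff₀ (by linarith)] at h3
      linarith [h3]
    nlinarith
  have Ig : IntervalIntegrable (fun x => g x ^ 2) volume 0 π :=
    (((hgc).pow 2).mono hsub).intervalIntegrable
  have Ig' : IntervalIntegrable (fun x => g' x ^ 2) volume 0 π :=
    (((hg').pow 2).mono hsub).intervalIntegrable
  have := intervalIntegral.integral_sub Ig' Ig
  rw [hh] at hI
  rw [this] at hI
  linarith

lemma wirtinger2 (g g' g'' : ℝ → ℝ) (hg : ∀ x ∈ Icc 0 π, HasDerivAt g (g' x) x)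
    (hg1 : ∀ x ∈ Icc 0 π, HasDerivAt g' (g'' x) x) (hg2 : ContinuousOn g'' (Icc 0 π))
    (h0 : g 0 = 0) (hpi : g π = 0) :
    ∫ x in (0:ℝ)..π, g' x ^ 2 ≤ ∫ x in (0:ℝ)..π, g'' x ^ 2 := by
  have pi_pos := Real.pi_pos
  have hsub : Set.uIcc (0:ℝ) π ⊆ Icc 0 π := by rw [Set.uIcc_of_le pi_pos.le]
  have hgc : ContinuousOn g (Icc 0 π) := fun x hx => (hg x hx).continuousAt.continuousWithinAt
  have hg'c : ContinuousOn g' (Icc 0 π) := fun x hx => (hg1 x hx).continuousAt.continuousWithinAt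
  -- Wirtinger for g
  have w1 : ∫ x in (0:ℝ)..π, g x ^ 2 ≤ ∫ x in (0:ℝ)..π, g' x ^ 2 :=
    wirtinger g g' hg hg'c h0 hpi
  -- integration by parts : ∫ g'^2 = - ∫ g g''
  have ibp : ∫ x in (0:ℝ)..π, (g' x ^ 2 + g x * g'' x) = 0 := by
    have hd : ∀ x ∈ Set.uIcc (0:ℝ) π,
        HasDerivAt (fun y => g y * g' y) (g' x ^ 2 + g x * g'' x) x := by
      intro x hx
      have := (hg x (hsub hx)).mul (hg1 x (hsub hx))
      refine this.congr_deriv (Eq.symm ?_); ring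
    have hint : IntervalIntegrable (fun x => g' x ^ 2 + g x * g'' x) volume 0 π :=
      (((hg'c.pow 2).add (hgc.mul hg2)).mono hsub).intervalIntegrable
    rw [integral_eq_sub_of_hasDerivAt hd hint, h0, hpi]
    ring
  have Ig' : IntervalIntegrable (fun x => g' x ^ 2) volume 0 π :=
    ((hg'c.pow 2).mono hsub).intervalIntegrable
  have Igg'' : IntervalIntegrable (fun x => g x * g'' x) volume 0 π :=
    (((hgc.mul hg2)).mono hsub).intervalIntegrable
  have ibp2 : ∫ x in (0:ℝ)..π, g x * g'' x = -∫ x in (0:ℝ)..π, g' x ^ 2 := by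
    have := intervalIntegral.integral_add Ig' Igg''
    rw [this] at ibp
    linarith
  -- Cauchy–Schwarz
  have cs := myCS g g'' hgc hg2
  set a := ∫ x in (0:ℝ)..π, g' x ^ 2 with ha
  set b := ∫ x in (0:ℝ)..π, g'' x ^ 2 with hb
  have ha0 : 0 ≤ a := intervalIntegral.integral_nonneg pi_pos.le (fun x _ => by positivity)
  have hb0 : 0 ≤ b := intervalIntegral.integral_nonneg pi_pos.le (fun x _ => by positivity)
  rw [ibp2] at cs
  -- cs : (-a)^2 ≤ (∫ g^2) * b ≤ a * b
  have hgsq : ∫ x in (0:ℝ)..π, g x ^ 2 ≤ a := w1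
  have h2 : a ^ 2 ≤ a * b := by
    have := mul_le_mul_of_nonneg_right hgsq hb0
    nlinarith
  rcases eq_or_lt_of_le ha0 with h | h
  · linarith
  · nlinarith

variable {E : Type*} [NormedAddCommGroup E] [NormedSpace ℝ E]

lemma sderiv_contDiffOn {F : ℝ × ℝ → E} {U : Set (ℝ × ℝ)} (hU : IsOpen U)
    (hF : ContDiffOn ℝ (⊤ : ℕ∞) F U) (w : ℝ × ℝ) :
    ContDiffOn ℝ (⊤ : ℕ∞) (fun p => fderiv ℝ F p w) U :=
  (hF.fderiv_of_isOpen hU (by simp)).clm_apply contDiffOn_const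

lemma line1 {F : ℝ × ℝ → E} {s θ : ℝ} (hF : DifferentiableAt ℝ F (s, θ)) :
    HasDerivAt (fun x => F (x, θ)) (fderiv ℝ F (s, θ) ((1:ℝ), (0:ℝ))) s := by
  have h2 : HasDerivAt (fun x : ℝ => (x, θ)) ((1:ℝ), (0:ℝ)) s :=
    (hasDerivAt_id s).prodMk (hasDerivAt_const s θ)
  exact hF.hasFDerivAt.comp_hasDerivAt s h2

lemma line2 {F : ℝ × ℝ → E} {s θ : ℝ} (hF : DifferentiableAt ℝ F (s, θ)) :
    HasDerivAt (fun y => F (s, y)) (fderiv ℝ F (s, θ) ((0:ℝ), (1:ℝ))) θ := by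
  have h2 : HasDerivAt (fun y : ℝ => (s, y)) ((0:ℝ), (1:ℝ)) θ :=
    (hasDerivAt_const θ s).prodMk (hasDerivAt_id θ)
  exact hF.hasFDerivAt.comp_hasDerivAt θ h2

lemma diffAt_of_contDiffOn {F : ℝ × ℝ → E} {U : Set (ℝ × ℝ)} (hU : IsOpen U)
    (hF : ContDiffOn ℝ (⊤ : ℕ∞) F U) {p : ℝ × ℝ} (hp : p ∈ U) : DifferentiableAt ℝ F p :=
  (hF.differentiableOn (by simp)).differentiableAt (hU.mem_nhds hp)

lemma fderiv_swap {F : ℝ × ℝ → E} {U : Set (ℝ × ℝ)} (hU : IsOpen U)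
    (hF : ContDiffOn ℝ (⊤ : ℕ∞) F U) {p : ℝ × ℝ} (hp : p ∈ U) (a b : ℝ × ℝ) :
    fderiv ℝ (fun q => fderiv ℝ F q a) p b = fderiv ℝ (fun q => fderiv ℝ F q b) p a := by
  have hsym : IsSymmSndFDerivAt ℝ F p :=
    (hF.contDiffAt (hU.mem_nhds hp)).isSymmSndFDerivAt (by rw [minSmoothness_of_isRCLikeNormedField]; exact WithTop.coe_le_coe.mpr le_top)
  have hdiff : DifferentiableAt ℝ (fderiv ℝ F) p :=
    (((hF.fderiv_of_isOpen hU (m := (⊤ : ℕ∞)) (by simp))).differentiableOn (by simp)).differentiableAt (hU.mem_nhds hp)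
  have key : ∀ c : ℝ × ℝ, fderiv ℝ (fun q => fderiv ℝ F q c) p
      = (fderiv ℝ (fderiv ℝ F) p).flip c := by
    intro c
    have := fderiv_clm_apply (c := fderiv ℝ F) (u := fun _ => c) hdiff (differentiableAt_const c)
    simpa using this
  rw [key a, key b]
  exact hsym b a

open RealInnerProductSpace
set_option maxHeartbeats 2000000

/-- Euclidean case of the angular-energy differential inequality (Lemma 8.1): if `u` is smooth on
the closed half cylinder `[−3l, 3l] × [0, π]`, harmonic (`∂_t²u + ∂_θ²u = 0`), and satisfies the
Euclidean free boundary conditions relative to `ℝᵏ ⊂ ℝⁿ` (for `θ ∈ {0, π}`: the last `n − k`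
components of `u` vanish and the first `k` components of `∂_θ u` vanish), then the angular energy
`f(t) = ∫_0^π |∂_θ u(t,θ)|² dθ` satisfies `f''(t) ≥ 2 f(t)` on `(−3l, 3l)`. -/
theorem stmt_7 (l : ℝ) (hl : 0 < l) (n k : ℕ) (hk : k ≤ n)
    (u : ℝ × ℝ → EuclideanSpace ℝ (Fin n))
    (U : Set (ℝ × ℝ)) (hU : IsOpen U)
    (hUc : Set.Icc (-(3 * l)) (3 * l) ×ˢ Set.Icc 0 Real.pi ⊆ U)
    (hu : ContDiffOn ℝ (⊤ : ℕ∞) u U)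
    (harm : ∀ p ∈ Set.Icc (-(3 * l)) (3 * l) ×ˢ Set.Icc 0 Real.pi,
      fderiv ℝ (fun q => fderiv ℝ u q ((1 : ℝ), (0 : ℝ))) p ((1 : ℝ), (0 : ℝ))
        + fderiv ℝ (fun q => fderiv ℝ u q ((0 : ℝ), (1 : ℝ))) p ((0 : ℝ), (1 : ℝ)) = 0)
    (hbd : ∀ t ∈ Set.Icc (-(3 * l)) (3 * l), ∀ θ ∈ ({0, Real.pi} : Set ℝ), ∀ j : Fin n,
      (k ≤ (j : ℕ) → u (t, θ) j = 0) ∧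
      ((j : ℕ) < k → fderiv ℝ u (t, θ) ((0 : ℝ), (1 : ℝ)) j = 0)) :
    ∀ t ∈ Set.Ioo (-(3 * l)) (3 * l),
      2 * (∫ θ in (0 : ℝ)..Real.pi, ‖fderiv ℝ u (t, θ) ((0 : ℝ), (1 : ℝ))‖ ^ 2) ≤
        deriv (deriv
          (fun s => ∫ θ in (0 : ℝ)..Real.pi, ‖fderiv ℝ u (s, θ) ((0 : ℝ), (1 : ℝ))‖ ^ 2)) t := by
  intro t ht
  have pi_pos := Real.pi_pos
  set K : Set (ℝ × ℝ) := Set.Icc (-(3 * l)) (3 * l) ×ˢ Set.Icc 0 π with hKdef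
  have hKc : IsCompact K := isCompact_Icc.prod isCompact_Icc
  obtain ⟨v, hv⟩ : ∃ v, v = fun p : ℝ × ℝ => fderiv ℝ u p ((0:ℝ), (1:ℝ)) := ⟨_, rfl⟩
  obtain ⟨ut, hut⟩ : ∃ w, w = fun p : ℝ × ℝ => fderiv ℝ u p ((1:ℝ), (0:ℝ)) := ⟨_, rfl⟩
  obtain ⟨vt, hvt⟩ : ∃ w, w = fun p : ℝ × ℝ => fderiv ℝ v p ((1:ℝ), (0:ℝ)) := ⟨_, rfl⟩
  obtain ⟨vh, hvh⟩ : ∃ w, w = fun p : ℝ × ℝ => fderiv ℝ v p ((0:ℝ), (1:ℝ)) := ⟨_, rfl⟩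
  obtain ⟨vtt, hvtt⟩ : ∃ w, w = fun p : ℝ × ℝ => fderiv ℝ vt p ((1:ℝ), (0:ℝ)) := ⟨_, rfl⟩
  obtain ⟨vhh, hvhh⟩ : ∃ w, w = fun p : ℝ × ℝ => fderiv ℝ vh p ((0:ℝ), (1:ℝ)) := ⟨_, rfl⟩
  obtain ⟨utt, hutt⟩ : ∃ w, w = fun p : ℝ × ℝ => fderiv ℝ ut p ((1:ℝ), (0:ℝ)) := ⟨_, rfl⟩
  -- smoothness
  have hvS : ContDiffOn ℝ (⊤ : ℕ∞) v U := hv ▸ sderiv_contDiffOn hU hu _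
  have hutS : ContDiffOn ℝ (⊤ : ℕ∞) ut U := hut ▸ sderiv_contDiffOn hU hu _
  have hvtS : ContDiffOn ℝ (⊤ : ℕ∞) vt U := hvt ▸ sderiv_contDiffOn hU hvS _
  have hvhS : ContDiffOn ℝ (⊤ : ℕ∞) vh U := hvh ▸ sderiv_contDiffOn hU hvS _
  have hvttS : ContDiffOn ℝ (⊤ : ℕ∞) vtt U := hvtt ▸ sderiv_contDiffOn hU hvtS _
  have hvhhS : ContDiffOn ℝ (⊤ : ℕ∞) vhh U := hvhh ▸ sderiv_contDiffOn hU hvhS _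
  have huttS : ContDiffOn ℝ (⊤ : ℕ∞) utt U := hutt ▸ sderiv_contDiffOn hU hutS _
  -- rewrite the goal in terms of v
  have hva : ∀ p : ℝ × ℝ, fderiv ℝ u p ((0:ℝ), (1:ℝ)) = v p := fun p => by rw [hv]
  simp only [hva]
  -- membership helpers
  have hmemK : ∀ x ∈ Set.Ioo (-(3*l)) (3*l), ∀ θ ∈ Set.Icc (0:ℝ) π, (x, θ) ∈ K := by
    intro x hx θ hθ
    exact ⟨⟨hx.1.le, hx.2.le⟩, hθ⟩
  have hKU : K ⊆ U := hUc
  -- line derivatives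
  have lineV1 : ∀ x θ : ℝ, (x,θ) ∈ U → HasDerivAt (fun x' => v (x', θ)) (vt (x,θ)) x := by
    intro x θ hp; rw [hvt]; exact line1 (diffAt_of_contDiffOn hU hvS hp)
  have lineVt1 : ∀ x θ : ℝ, (x,θ) ∈ U → HasDerivAt (fun x' => vt (x', θ)) (vtt (x,θ)) x := by
    intro x θ hp; rw [hvtt]; exact line1 (diffAt_of_contDiffOn hU hvtS hp)
  have lineV2 : ∀ x θ : ℝ, (x,θ) ∈ U → HasDerivAt (fun y => v (x, y)) (vh (x,θ)) θ := by
    intro x θ hp; rw [hvh]; exact line2 (diffAt_of_contDiffOn hU hvS hp)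
  have lineVh2 : ∀ x θ : ℝ, (x,θ) ∈ U → HasDerivAt (fun y => vh (x, y)) (vhh (x,θ)) θ := by
    intro x θ hp; rw [hvhh]; exact line2 (diffAt_of_contDiffOn hU hvhS hp)
  have lineU2 : ∀ x θ : ℝ, (x,θ) ∈ U → HasDerivAt (fun y => u (x, y)) (v (x,θ)) θ := by
    intro x θ hp; rw [hv]; exact line2 (diffAt_of_contDiffOn hU hu hp)
  -- continuity
  have cV : ContinuousOn v U := hvS.continuousOn
  have cVt : ContinuousOn vt U := hvtS.continuousOn
  have cVh : ContinuousOn vh U := hvhS.continuousOn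
  have cVtt : ContinuousOn vtt U := hvttS.continuousOn
  have cVhh : ContinuousOn vhh U := hvhhS.continuousOn
  -- the three integrands as functions of the full variable
  have cI0 : ContinuousOn (fun p => ‖v p‖^2) U := (cV.norm).pow 2
  have cI1 : ContinuousOn (fun p => 2 * ⟪v p, vt p⟫) U :=
    (continuousOn_const.mul (cV.inner cVt))
  have cI2 : ContinuousOn (fun p => 2 * (‖vt p‖^2 + ⟪v p, vtt p⟫)) U :=
    (continuousOn_const.mul (((cVt.norm).pow 2).add (cV.inner cVtt)))
  -- bounds on K
  obtain ⟨B1, hB1⟩ := hKc.exists_bound_of_continuousOn (cI1.mono hKU)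
  obtain ⟨B2, hB2⟩ := hKc.exists_bound_of_continuousOn (cI2.mono hKU)
  -- pointwise derivative of the first integrand in the t-direction
  have pd1 : ∀ x θ : ℝ, (x,θ) ∈ U →
      HasDerivAt (fun x' => ‖v (x', θ)‖^2) (2 * ⟪v (x,θ), vt (x,θ)⟫) x := by
    intro x θ hp
    have h1 := (lineV1 x θ hp).inner ℝ (lineV1 x θ hp)
    have e : (fun x' => ‖v (x', θ)‖^2) = fun x' => ⟪v (x', θ), v (x', θ)⟫ :=
      funext fun x' => (real_inner_self_eq_norm_sq _).symm
    rw [e]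
    refine h1.congr_deriv (Eq.symm ?_)
    rw [real_inner_comm]; ring
  have pd2 : ∀ x θ : ℝ, (x,θ) ∈ U →
      HasDerivAt (fun x' => 2 * ⟪v (x', θ), vt (x', θ)⟫)
        (2 * (‖vt (x,θ)‖^2 + ⟪v (x,θ), vtt (x,θ)⟫)) x := by
    intro x θ hp
    have h1 := ((lineV1 x θ hp).inner ℝ (lineVt1 x θ hp)).const_mul (2:ℝ)
    refine h1.congr_deriv (Eq.symm ?_)
    rw [← real_inner_self_eq_norm_sq]; ring
  -- slice measurability / integrability helpers
  have hIoc : Set.uIoc (0:ℝ) π = Set.Ioc 0 π := Set.uIoc_of_le pi_pos.le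
  have sliceInt : ∀ (G : ℝ × ℝ → ℝ), ContinuousOn G U → ∀ x ∈ Set.Ioo (-(3*l)) (3*l),
      IntervalIntegrable (fun θ => G (x,θ)) volume 0 π := by
    intro G hG x hx
    have : ContinuousOn (fun θ => G (x,θ)) (Set.Icc 0 π) :=
      hG.comp ((continuous_const.prodMk continuous_id).continuousOn)
        (fun θ hθ => hKU (hmemK x hx θ hθ))
    exact (this.mono (by rw [Set.uIcc_of_le pi_pos.le])).intervalIntegrable
  have sliceMeas : ∀ (G : ℝ × ℝ → ℝ), ContinuousOn G U → ∀ x ∈ Set.Ioo (-(3*l)) (3*l),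
      AEStronglyMeasurable (fun θ => G (x,θ)) (volume.restrict (Set.uIoc 0 π)) := by
    intro G hG x hx
    rw [hIoc]
    have hc : ContinuousOn (fun θ => G (x,θ)) (Set.Ioc 0 π) :=
      (hG.comp ((continuous_const.prodMk continuous_id).continuousOn)
        (fun θ hθ => hKU (hmemK x hx θ hθ))).mono Set.Ioc_subset_Icc_self
    exact hc.aestronglyMeasurable measurableSet_Ioc
  -- differentiation under the integral, first time
  have D1 : ∀ s ∈ Set.Ioo (-(3*l)) (3*l),
      HasDerivAt (fun x => ∫ θ in (0:ℝ)..π, ‖v (x,θ)‖^2)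
        (∫ θ in (0:ℝ)..π, 2 * ⟪v (s,θ), vt (s,θ)⟫) s := by
    intro s hs
    set ε := min (3*l - s) (s + 3*l) / 2 with hε
    have hεpos : 0 < ε := by
      have := hs.1; have := hs.2
      apply div_pos (lt_min (by linarith) (by linarith)) two_pos
    have hball : ∀ x ∈ Metric.ball s ε, x ∈ Set.Ioo (-(3*l)) (3*l) := by
      intro x hx
      rw [Real.ball_eq_Ioo] at hx
      constructor
      · have h5 : ε ≤ (s + 3*l)/2 := by
          rw [hε]; gcongr; exact min_le_right _ _
        linarith [hx.1]
      · have h5 : ε ≤ (3*l - s)/2 := by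
          rw [hε]; gcongr; exact min_le_left _ _
        linarith [hx.2]
    have := intervalIntegral.hasDerivAt_integral_of_dominated_loc_of_deriv_le
      (F := fun x θ => ‖v (x,θ)‖^2) (F' := fun x θ => 2 * ⟪v (x,θ), vt (x,θ)⟫)
      (x₀ := s) (a := 0) (b := π) (μ := volume) (bound := fun _ => |B1|) (Metric.ball_mem_nhds s hεpos)
      ?_ ?_ ?_ ?_ ?_ ?_
    · exact this.2
    · filter_upwards [(isOpen_Ioo (a := -(3*l)) (b := 3*l)).mem_nhds hs] with x hx
      exact sliceMeas _ cI0 x hx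
    · exact sliceInt _ cI0 s hs
    · exact sliceMeas _ cI1 s hs
    · apply Filter.Eventually.of_forall
      intro θ hθ x hx
      rw [hIoc] at hθ
      have hmem : (x, θ) ∈ K := hmemK x (hball x hx) θ ⟨hθ.1.le, hθ.2⟩
      calc ‖2 * ⟪v (x,θ), vt (x,θ)⟫‖ ≤ B1 := hB1 _ hmem
        _ ≤ |B1| := le_abs_self _
    · exact intervalIntegrable_const
    · apply Filter.Eventually.of_forall
      intro θ hθ x hx
      rw [hIoc] at hθ
      exact pd1 x θ (hKU (hmemK x (hball x hx) θ ⟨hθ.1.le, hθ.2⟩))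
  -- differentiation under the integral, second time (at t only)
  have D2 : HasDerivAt (fun x => ∫ θ in (0:ℝ)..π, 2 * ⟪v (x,θ), vt (x,θ)⟫)
      (∫ θ in (0:ℝ)..π, 2 * (‖vt (t,θ)‖^2 + ⟪v (t,θ), vtt (t,θ)⟫)) t := by
    set ε := min (3*l - t) (t + 3*l) / 2 with hε
    have hεpos : 0 < ε := by
      have := ht.1; have := ht.2
      apply div_pos (lt_min (by linarith) (by linarith)) two_pos
    have hball : ∀ x ∈ Metric.ball t ε, x ∈ Set.Ioo (-(3*l)) (3*l) := by
      intro x hx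
      rw [Real.ball_eq_Ioo] at hx
      constructor
      · have h5 : ε ≤ (t + 3*l)/2 := by
          rw [hε]; gcongr; exact min_le_right _ _
        linarith [hx.1]
      · have h5 : ε ≤ (3*l - t)/2 := by
          rw [hε]; gcongr; exact min_le_left _ _
        linarith [hx.2]
    have := intervalIntegral.hasDerivAt_integral_of_dominated_loc_of_deriv_le
      (F := fun x θ => 2 * ⟪v (x,θ), vt (x,θ)⟫)
      (F' := fun x θ => 2 * (‖vt (x,θ)‖^2 + ⟪v (x,θ), vtt (x,θ)⟫))
      (x₀ := t) (a := 0) (b := π) (μ := volume) (bound := fun _ => |B2|) (Metric.ball_mem_nhds t hεpos)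
      ?_ ?_ ?_ ?_ ?_ ?_
    · exact this.2
    · filter_upwards [(isOpen_Ioo (a := -(3*l)) (b := 3*l)).mem_nhds ht] with x hx
      exact sliceMeas _ cI1 x hx
    · exact sliceInt _ cI1 t ht
    · exact sliceMeas _ cI2 t ht
    · apply Filter.Eventually.of_forall
      intro θ hθ x hx
      rw [hIoc] at hθ
      have hmem : (x, θ) ∈ K := hmemK x (hball x hx) θ ⟨hθ.1.le, hθ.2⟩
      calc ‖2 * (‖vt (x,θ)‖^2 + ⟪v (x,θ), vtt (x,θ)⟫)‖ ≤ B2 := hB2 _ hmem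
        _ ≤ |B2| := le_abs_self _
    · exact intervalIntegrable_const
    · apply Filter.Eventually.of_forall
      intro θ hθ x hx
      rw [hIoc] at hθ
      exact pd2 x θ (hKU (hmemK x (hball x hx) θ ⟨hθ.1.le, hθ.2⟩))
  -- identification of the second derivative
  have hdd : deriv (deriv (fun s => ∫ θ in (0:ℝ)..π, ‖v (s,θ)‖^2)) t
      = ∫ θ in (0:ℝ)..π, 2 * (‖vt (t,θ)‖^2 + ⟪v (t,θ), vtt (t,θ)⟫) := by
    have he : deriv (fun s => ∫ θ in (0:ℝ)..π, ‖v (s,θ)‖^2)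
        =ᶠ[nhds t] (fun s => ∫ θ in (0:ℝ)..π, 2 * ⟪v (s,θ), vt (s,θ)⟫) := by
      filter_upwards [Ioo_mem_nhds ht.1 ht.2] with s hs
      exact (D1 s hs).deriv
    rw [he.deriv_eq, D2.deriv]
  rw [hdd]
  -- harmonicity rewritten
  have h4 : ∀ q ∈ K, utt q = -vh q := by
    intro q hq
    apply eq_neg_of_add_eq_zero_left
    have := harm q hq
    simp only [hutt, hut, hvh, hv]
    simpa using this
  -- interior of K
  have hint : interior K = Set.Ioo (-(3*l)) (3*l) ×ˢ Set.Ioo 0 π := by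
    rw [hKdef, interior_prod_eq, interior_Icc, interior_Icc]
  -- third derivative identity from symmetry + harmonicity
  have hsym3 : ∀ θ ∈ Set.Ioo (0:ℝ) π, vtt (t,θ) = -vhh (t,θ) := by
    intro θ hθ
    have hpK : (t,θ) ∈ interior K := by rw [hint]; exact ⟨ht, hθ⟩
    have hpU : (t,θ) ∈ U := hKU (interior_subset hpK)
    -- step 1: vt = ∂_θ ut on U
    have h1 : ∀ q ∈ U, vt q = fderiv ℝ ut q ((0:ℝ),(1:ℝ)) := by
      intro q hq
      simp only [hvt, hv, hut]
      exact fderiv_swap hU hu hq _ _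
    -- step 2
    have h2 : vtt (t,θ) = fderiv ℝ (fun q => fderiv ℝ ut q ((0:ℝ),(1:ℝ))) (t,θ) ((1:ℝ),(0:ℝ)) := by
      have heq : vt =ᶠ[nhds (t,θ)] (fun q => fderiv ℝ ut q ((0:ℝ),(1:ℝ))) :=
        Filter.eventuallyEq_of_mem (hU.mem_nhds hpU) h1
      simp only [hvtt]
      rw [heq.fderiv_eq]
    -- step 3 : swap for ut
    have h3 : vtt (t,θ) = fderiv ℝ utt (t,θ) ((0:ℝ),(1:ℝ)) := by
      rw [h2, fderiv_swap hU hutS hpU, hutt]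
    -- step 4 : replace utt by -vh near p
    have h5 : utt =ᶠ[nhds (t,θ)] (fun q => -vh q) :=
      Filter.eventuallyEq_of_mem (isOpen_interior.mem_nhds hpK)
        (fun q hq => h4 q (interior_subset hq))
    rw [h3, h5.fderiv_eq, fderiv_fun_neg, hvhh]
    simp
  -- integration by parts
  have hibp0 : ∫ θ in (0:ℝ)..π, (‖vh (t,θ)‖^2 + ⟪v (t,θ), vhh (t,θ)⟫)
      = ⟪v (t,π), vh (t,π)⟫ - ⟪v (t,0), vh (t,0)⟫ := by
    apply integral_eq_sub_of_hasDerivAt (f := fun θ => ⟪v (t,θ), vh (t,θ)⟫)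
    · intro θ hθ
      rw [Set.uIcc_of_le pi_pos.le] at hθ
      have hqU : (t,θ) ∈ U := hKU (hmemK t ht θ hθ)
      have h1 := (lineV2 t θ hqU).inner ℝ (lineVh2 t θ hqU)
      refine h1.congr_deriv (Eq.symm ?_)
      rw [← real_inner_self_eq_norm_sq]; ring
    · exact sliceInt (fun p => ‖vh p‖^2 + ⟪v p, vhh p⟫)
        (((cVh.norm).pow 2).add (cV.inner cVhh)) t ht
  -- boundary terms vanish
  have hbval : ∀ θb ∈ ({0, π} : Set ℝ), ⟪v (t,θb), vh (t,θb)⟫ = 0 := by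
    intro θb hθb
    have hθbIcc : θb ∈ Set.Icc (0:ℝ) π := by
      rcases hθb with rfl | h
      · exact ⟨le_refl _, pi_pos.le⟩
      · rw [Set.mem_singleton_iff] at h; subst h; exact ⟨pi_pos.le, le_refl _⟩
    have hpK : (t,θb) ∈ K := hmemK t ht θb hθbIcc
    have hut0 : ∀ j : Fin n, k ≤ (j:ℕ) → ∀ x ∈ Set.Ioo (-(3*l)) (3*l), ut (x,θb) j = 0 := by
      intro j hj x hx
      have hxU : (x,θb) ∈ U := hKU (hmemK x hx θb hθbIcc)
      have hline : HasDerivAt (fun x' => u (x',θb) j) (ut (x,θb) j) x := by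
        have h0 : HasDerivAt (fun x' => u (x',θb)) (ut (x,θb)) x := by
          rw [hut]; exact line1 (diffAt_of_contDiffOn hU hu hxU)
        exact (EuclideanSpace.proj j).hasFDerivAt.comp_hasDerivAt x h0
      have hzero : (fun x' => u (x',θb) j) =ᶠ[nhds x] (fun _ => (0:ℝ)) := by
        filter_upwards [Ioo_mem_nhds hx.1 hx.2] with y hy
        exact (hbd y ⟨hy.1.le, hy.2.le⟩ θb hθb j).1 hj
      exact (hline.congr_of_eventuallyEq hzero.symm).unique (hasDerivAt_const x 0)
    have hutt0 : ∀ j : Fin n, k ≤ (j:ℕ) → utt (t,θb) j = 0 := by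
      intro j hj
      have hxU : (t,θb) ∈ U := hKU hpK
      have hline : HasDerivAt (fun x' => ut (x',θb) j) (utt (t,θb) j) t := by
        have h0 : HasDerivAt (fun x' => ut (x',θb)) (utt (t,θb)) t := by
          rw [hutt]; exact line1 (diffAt_of_contDiffOn hU hutS hxU)
        exact (EuclideanSpace.proj j).hasFDerivAt.comp_hasDerivAt t h0
      have hzero : (fun x' => ut (x',θb) j) =ᶠ[nhds t] (fun _ => (0:ℝ)) := by
        filter_upwards [Ioo_mem_nhds ht.1 ht.2] with y hy
        exact hut0 j hj y hy
      exact (hline.congr_of_eventuallyEq hzero.symm).unique (hasDerivAt_const t 0)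
    rw [PiLp.inner_apply]
    apply Finset.sum_eq_zero
    intro j _
    rcases lt_or_ge (j:ℕ) k with hj | hj
    · have hz : v (t,θb) j = 0 := by
        rw [hv]; exact (hbd t ⟨ht.1.le, ht.2.le⟩ θb hθb j).2 hj
      simp [hz]
    · have hz : vh (t,θb) j = 0 := by
        have := h4 (t,θb) hpK
        have h6 : vh (t,θb) = -utt (t,θb) := by rw [this]; simp
        rw [h6]
        simp [hutt0 j hj]
      simp [hz]
  have hibp : ∫ θ in (0:ℝ)..π, (‖vh (t,θ)‖^2 + ⟪v (t,θ), vhh (t,θ)⟫) = 0 := by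
    rw [hibp0, hbval 0 (by simp), hbval π (by simp)]; ring
  -- norm squared as sum of squares of components
  have hnormsum : ∀ x : EuclideanSpace ℝ (Fin n), ‖x‖^2 = ∑ j, (x j)^2 := by
    intro x
    rw [EuclideanSpace.norm_eq, Real.sq_sqrt (Finset.sum_nonneg fun i _ => sq_nonneg _)]
    exact Finset.sum_congr rfl fun i _ => by rw [Real.norm_eq_abs, sq_abs]
  have cComp : ∀ (G : ℝ × ℝ → EuclideanSpace ℝ (Fin n)), ContinuousOn G U → ∀ j : Fin n,
      ContinuousOn (fun p => G p j) U := by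
    intro G hG j
    exact (EuclideanSpace.proj j).continuous.comp_continuousOn hG
  have hdU : ∀ θ ∈ Set.Icc (0:ℝ) π, (t,θ) ∈ U := fun θ hθ => hKU (hmemK t ht θ hθ)
  -- componentwise Wirtinger
  have hwirt : ∫ θ in (0:ℝ)..π, ‖v (t,θ)‖^2 ≤ ∫ θ in (0:ℝ)..π, ‖vh (t,θ)‖^2 := by
    have e1 : ∫ θ in (0:ℝ)..π, ‖v (t,θ)‖^2 = ∑ j : Fin n, ∫ θ in (0:ℝ)..π, (v (t,θ) j)^2 := by
      rw [← intervalIntegral.integral_finset_sum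
        (fun j _ => sliceInt (fun p => (v p j)^2) ((cComp v cV j).pow 2) t ht)]
      apply intervalIntegral.integral_congr
      intro θ _; exact hnormsum _
    have e2 : ∫ θ in (0:ℝ)..π, ‖vh (t,θ)‖^2 = ∑ j : Fin n, ∫ θ in (0:ℝ)..π, (vh (t,θ) j)^2 := by
      rw [← intervalIntegral.integral_finset_sum
        (fun j _ => sliceInt (fun p => (vh p j)^2) ((cComp vh cVh j).pow 2) t ht)]
      apply intervalIntegral.integral_congr
      intro θ _; exact hnormsum _
    rw [e1, e2]
    apply Finset.sum_le_sum
    intro j _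
    have hDu : ∀ θ ∈ Set.Icc (0:ℝ) π, HasDerivAt (fun y => u (t,y) j) (v (t,θ) j) θ := by
      intro θ hθ
      exact (EuclideanSpace.proj j).hasFDerivAt.comp_hasDerivAt θ (lineU2 t θ (hdU θ hθ))
    have hDv : ∀ θ ∈ Set.Icc (0:ℝ) π, HasDerivAt (fun y => v (t,y) j) (vh (t,θ) j) θ := by
      intro θ hθ
      exact (EuclideanSpace.proj j).hasFDerivAt.comp_hasDerivAt θ (lineV2 t θ (hdU θ hθ))
    have hCvh : ContinuousOn (fun θ => vh (t,θ) j) (Set.Icc 0 π) :=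
      (cComp vh cVh j).comp ((continuous_const.prodMk continuous_id).continuousOn)
        (fun θ hθ => hdU θ hθ)
    rcases lt_or_ge (j:ℕ) k with hj | hj
    · apply wirtinger _ _ hDv hCvh
      · rw [hv]; exact (hbd t ⟨ht.1.le, ht.2.le⟩ 0 (by simp) j).2 hj
      · rw [hv]; exact (hbd t ⟨ht.1.le, ht.2.le⟩ π (by simp) j).2 hj
    · apply wirtinger2 _ _ _ hDu hDv hCvh
      · exact (hbd t ⟨ht.1.le, ht.2.le⟩ 0 (by simp) j).1 hj
      · exact (hbd t ⟨ht.1.le, ht.2.le⟩ π (by simp) j).1 hj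
  -- assembling everything
  have hI1 : IntervalIntegrable (fun θ => ‖vt (t,θ)‖^2) volume 0 π :=
    sliceInt _ ((cVt.norm).pow 2) t ht
  have hI2 : IntervalIntegrable (fun θ => ‖vh (t,θ)‖^2) volume 0 π :=
    sliceInt _ ((cVh.norm).pow 2) t ht
  have hI3 : IntervalIntegrable (fun θ => ‖vh (t,θ)‖^2 + ⟪v (t,θ), vhh (t,θ)⟫) volume 0 π :=
    sliceInt _ (((cVh.norm).pow 2).add (cV.inner cVhh)) t ht
  have hcong : ∫ θ in (0:ℝ)..π, 2 * (‖vt (t,θ)‖^2 + ⟪v (t,θ), vtt (t,θ)⟫)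
      = ∫ θ in (0:ℝ)..π, (2 * ‖vt (t,θ)‖^2 + 2 * ‖vh (t,θ)‖^2
          - 2 * (‖vh (t,θ)‖^2 + ⟪v (t,θ), vhh (t,θ)⟫)) := by
    apply intervalIntegral.integral_congr_ae
    have h5 : ∀ᵐ θ : ℝ ∂volume, θ ≠ π := by
      refine MeasureTheory.ae_iff.mpr ?_
      have he : {θ : ℝ | ¬ θ ≠ π} = {π} := by ext θ; simp
      rw [he]; exact measure_singleton π
    filter_upwards [h5] with θ hθ hmem
    rw [hIoc] at hmem
    have hIoo : θ ∈ Set.Ioo (0:ℝ) π := ⟨hmem.1, lt_of_le_of_ne hmem.2 hθ⟩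
    rw [hsym3 θ hIoo, inner_neg_right]
    ring
  have hEq : ∫ θ in (0:ℝ)..π, 2 * (‖vt (t,θ)‖^2 + ⟪v (t,θ), vtt (t,θ)⟫)
      = 2 * (∫ θ in (0:ℝ)..π, ‖vt (t,θ)‖^2) + 2 * (∫ θ in (0:ℝ)..π, ‖vh (t,θ)‖^2) := by
    rw [hcong,
      intervalIntegral.integral_sub ((hI1.const_mul 2).add (hI2.const_mul 2)) (hI3.const_mul 2),
      intervalIntegral.integral_add (hI1.const_mul 2) (hI2.const_mul 2),
      intervalIntegral.integral_const_mul, intervalIntegral.integral_const_mul,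
      intervalIntegral.integral_const_mul, hibp]
    ring
  have hnn : 0 ≤ ∫ θ in (0:ℝ)..π, ‖vt (t,θ)‖^2 :=
    intervalIntegral.integral_nonneg pi_pos.le (fun θ _ => by positivity)
  linarith [hwirt, hnn, hEq]
end

section
/- Let 0 ≤ k ≤ n be integers and let v = (v¹, …, vⁿ) : [0, π] → ℝⁿ be a C² map such that v^{k+1}(0) = ⋯ = vⁿ(0) = 0 and v^{k+1}(π) = ⋯ = vⁿ(π) = 0, while (v¹)'(0) = ⋯ = (vᵏ)'(0) = 0 and (v¹)'(π) = ⋯ = (vᵏ)'(π) = 0. Then ∫_0^π |v'(θ)|² dθ ≤ ∫_0^π |v''(θ)|² dθ. (Second-order Wirtinger inequality under mixed Dirichlet–Neumann boundary conditions; the Euclidean version of inequality (E) in the proof of Lemma 8.1.) -/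
/-!
Each component is treated separately. Write `f` for a component of `v'` and `g = f'`. If the
component satisfies the Neumann condition, then `f` vanishes at `0` and `π` and its odd reflection
to `[-π, π]` is continuous. If it satisfies the Dirichlet condition, then `∫₀^π f = 0` and the even
reflection is used. In both cases the reflection `F` has mean zero and `F(-π) = F(π)`, and its right
derivative is the opposite reflection of `g`. Integrating by parts gives `ĉₙ(F) = ĉₙ(F') / (i n)`
for `n ≠ 0`, and `ĉ₀(F) = 0`. Parseval's identity then yields `∫ F² ≤ ∫ F'²`. Reflection doubles
both sides.
-/

open MeasureTheory Set intervalIntegral Complex Real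

theorem ContinuousOn.memLp_Icc {E : Type*} [NormedAddCommGroup E] {f : ℝ → E} {a b : ℝ}
    {p : ENNReal} (hf : ContinuousOn f (Icc a b)) : MemLp f p (volume.restrict (Icc a b)) := by
  obtain ⟨C, hC⟩ := isCompact_Icc.exists_bound_of_continuousOn hf
  exact .of_bound (hf.aestronglyMeasurable measurableSet_Icc) C
    (ae_restrict_of_forall_mem measurableSet_Icc hC)

theorem norm_fourierCoeffOn_of_hasDeriv_right {a b : ℝ} (hab : a < b) {f f' : ℝ → ℂ} {n : ℤ}
    (hn : n ≠ 0) (hf : ContinuousOn f (Icc a b)) (hfab : f a = f b)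
    (hff' : ∀ x ∈ Ioo a b, HasDerivWithinAt f (f' x) (Ioi x) x)
    (hf' : IntervalIntegrable f' volume a b) :
    ‖fourierCoeffOn hab f n‖ =
      (b - a) / (2 * π * |(n : ℝ)|) * ‖fourierCoeffOn hab f' n‖ := by
  rw [fourierCoeffOn_of_hasDeriv_right hab hn (by rwa [uIcc_of_le hab.le])
    (by rwa [min_eq_left hab.le, max_eq_right hab.le]) hf', hfab, sub_self, mul_zero, zero_sub,
    ← ofReal_sub, norm_mul, norm_neg, norm_mul, norm_real, Real.norm_of_nonneg (sub_pos.2 hab).le]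
  have hI : ‖1 / (-2 * π * I * n)‖ = 1 / (2 * π * |(n : ℝ)|) := by simp [abs_of_pos pi_pos]
  rw [hI]
  ring

theorem integral_norm_sq_le_of_hasDeriv_right {a b : ℝ} (hab : a < b) {f f' : ℝ → ℂ}
    (hf : ContinuousOn f (Icc a b)) (hfab : f a = f b) (hmean : ∫ x in a..b, f x = 0)
    (hff' : ∀ x ∈ Ioo a b, HasDerivWithinAt f (f' x) (Ioi x) x)
    (hf' : MemLp f' 2 (volume.restrict (Ioc a b))) :
    ∫ x in a..b, ‖f x‖ ^ 2 ≤ ((b - a) / (2 * π)) ^ 2 * ∫ x in a..b, ‖f' x‖ ^ 2 := by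
  have hf'int : IntervalIntegrable f' volume a b :=
    (intervalIntegrable_iff_integrableOn_Ioc_of_le hab.le).2 (hf'.integrable one_le_two)
  have hcoeff (n : ℤ) : ‖fourierCoeffOn hab f n‖ ^ 2 ≤
      ((b - a) / (2 * π)) ^ 2 * ‖fourierCoeffOn hab f' n‖ ^ 2 := by
    rcases eq_or_ne n 0 with rfl | hn
    · have hc0 : fourierCoeffOn hab f 0 = 0 := by simp [fourierCoeffOn_eq_integral, hmean]
      rw [hc0, norm_zero, sq, zero_mul]
      positivity
    rw [norm_fourierCoeffOn_of_hasDeriv_right hab hn hf hfab hff' hf'int, mul_pow]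
    have hn1 : (1 : ℝ) ≤ |(n : ℝ)| := by exact_mod_cast Int.one_le_abs hn
    have h2π : (0 : ℝ) < 2 * π := by positivity
    gcongr ?_ ^ 2 * _
    exact div_le_div_of_nonneg_left (sub_pos.2 hab).le h2π (le_mul_of_one_le_right h2π.le hn1)
  have hf2 : MemLp f 2 (volume.restrict (Ioc a b)) :=
    hf.memLp_Icc.mono_measure (Measure.restrict_mono Ioc_subset_Icc_self le_rfl)
  have hsum := hasSum_le hcoeff (hasSum_sq_fourierCoeffOn hab hf2)
    ((hasSum_sq_fourierCoeffOn hab hf').mul_left _)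
  simp only [smul_eq_mul, mul_left_comm _ (b - a)⁻¹] at hsum
  exact le_of_mul_le_mul_left hsum (inv_pos.2 (sub_pos.2 hab))

theorem integral_sq_le_of_hasDeriv_right {a b : ℝ} (hab : a < b) {f f' : ℝ → ℝ}
    (hf : ContinuousOn f (Icc a b)) (hfab : f a = f b) (hmean : ∫ x in a..b, f x = 0)
    (hff' : ∀ x ∈ Ioo a b, HasDerivWithinAt f (f' x) (Ioi x) x)
    (hf' : MemLp f' 2 (volume.restrict (Ioc a b))) :
    ∫ x in a..b, f x ^ 2 ≤ ((b - a) / (2 * π)) ^ 2 * ∫ x in a..b, f' x ^ 2 := by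
  have h := integral_norm_sq_le_of_hasDeriv_right hab (f := fun x ↦ (f x : ℂ))
    (f' := fun x ↦ f' x) (continuous_ofReal.comp_continuousOn hf) (congrArg _ hfab)
    (by rw [integral_ofReal, hmean, ofReal_zero]) (fun x hx ↦ (hff' x hx).ofReal_comp)
    hf'.ofReal
  simpa only [norm_real, Real.norm_eq_abs, sq_abs] using h

/-- At `0` the value is `f 0`, so that the right derivative of `reflect σ f` at `0` is that
of `f`. -/
noncomputable def reflect (σ : ℝ) (f : ℝ → ℝ) : ℝ → ℝ :=
  (Ici 0).piecewise f fun x ↦ σ * f (-x)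

section reflect

variable {σ a : ℝ} {f g : ℝ → ℝ}

theorem reflect_of_nonneg {x : ℝ} (hx : 0 ≤ x) : reflect σ f x = f x :=
  Set.piecewise_eq_of_mem _ _ _ hx

theorem reflect_of_neg {x : ℝ} (hx : x < 0) : reflect σ f x = σ * f (-x) :=
  Set.piecewise_eq_of_notMem _ _ _ (not_le.2 hx)

theorem reflect_sq (x : ℝ) : reflect σ f x ^ 2 = reflect (σ ^ 2) (fun y ↦ f y ^ 2) x := by
  rcases le_or_gt 0 x with hx | hx
  · simp only [reflect_of_nonneg hx]
  · simp only [reflect_of_neg hx, mul_pow]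

theorem ContinuousOn.const_mul_comp_neg (hf : ContinuousOn f (Icc 0 a)) :
    ContinuousOn (fun x ↦ σ * f (-x)) (Icc (-a) 0) :=
  continuousOn_const.mul <| hf.comp continuousOn_neg fun x hx ↦
    ⟨by linarith [hx.2], by linarith [hx.1]⟩

theorem continuousOn_reflect (hf : ContinuousOn f (Icc 0 a)) (h0 : σ * f 0 = f 0) :
    ContinuousOn (reflect σ f) (Icc (-a) a) := by
  have hneg : ContinuousOn (reflect σ f) (Icc (-a) 0) := by
    refine (hf.const_mul_comp_neg (σ := σ)).congr fun x hx ↦ ?_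
    rcases hx.2.lt_or_eq with hx' | rfl
    · exact reflect_of_neg hx'
    · simp [reflect_of_nonneg, h0]
  have hpos : ContinuousOn (reflect σ f) (Icc 0 a) :=
    hf.congr fun x hx ↦ reflect_of_nonneg hx.1
  rcases le_or_gt 0 a with ha | ha
  · rw [← Icc_union_Icc_eq_Icc (neg_nonpos.2 ha) ha]
    exact hneg.union_of_isClosed hpos isClosed_Icc isClosed_Icc
  · simp [Icc_eq_empty_of_lt (show a < -a by linarith)]

theorem hasDerivWithinAt_reflect (hfg : ∀ x ∈ Icc 0 a, HasDerivWithinAt f (g x) (Icc 0 a) x)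
    {x : ℝ} (hx : x ∈ Ioo (-a) a) :
    HasDerivWithinAt (reflect σ f) (reflect (-σ) g x) (Ioi x) x := by
  rcases lt_or_ge x 0 with hneg | hnonneg
  · have hf : HasDerivAt f (g (-x)) (-x) := (hfg _ ⟨by linarith, by linarith [hx.1]⟩).hasDerivAt
      (Icc_mem_nhds (by linarith) (by linarith [hx.1]))
    have h := ((hf.comp x (hasDerivAt_neg x)).const_mul σ).hasDerivWithinAt (s := Ioi x)
    rw [reflect_of_neg hneg]
    refine (h.congr_of_eventuallyEq ?_ (reflect_of_neg hneg)).congr_deriv (by ring)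
    filter_upwards [nhdsWithin_le_nhds (Iio_mem_nhds hneg)] with y hy
    exact reflect_of_neg hy
  · rw [reflect_of_nonneg hnonneg]
    exact ((hfg x ⟨hnonneg, hx.2.le⟩).mono_of_mem_nhdsWithin
      (Icc_mem_nhdsGT_of_mem ⟨hnonneg, hx.2⟩)).congr
      (fun y hy ↦ reflect_of_nonneg (hnonneg.trans hy.le)) (reflect_of_nonneg hnonneg)

theorem memLp_reflect {p : ENNReal} (hf : ContinuousOn f (Icc 0 a)) :
    MemLp (reflect σ f) p (volume.restrict (Ioc (-a) a)) := by
  refine MemLp.piecewise measurableSet_Ici ?_ ?_ <;>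
    rw [Measure.restrict_restrict (by measurability)]
  · have hs : Ici 0 ∩ Ioc (-a) a ⊆ Icc 0 a := fun x hx ↦ ⟨hx.1, hx.2.2⟩
    exact hf.memLp_Icc.mono_measure (Measure.restrict_mono hs le_rfl)
  · have hs : (Ici 0)ᶜ ∩ Ioc (-a) a ⊆ Icc (-a) 0 := fun x hx ↦
      ⟨hx.2.1.le, (notMem_Ici.1 hx.1).le⟩
    exact hf.const_mul_comp_neg.memLp_Icc.mono_measure (Measure.restrict_mono hs le_rfl)

theorem integral_reflect (ha : 0 ≤ a) (hf : ContinuousOn f (Icc 0 a)) :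
    ∫ x in -a..a, reflect σ f x = (σ + 1) * ∫ x in 0..a, f x := by
  have hint : IntervalIntegrable (reflect σ f) volume (-a) a :=
    (intervalIntegrable_iff_integrableOn_Ioc_of_le (by linarith)).2
      (memLp_one_iff_integrable.1 (memLp_reflect hf))
  have hneg : ∫ x in -a..0, reflect σ f x = σ * ∫ x in 0..a, f x := by
    rw [← neg_zero, ← integral_comp_neg, neg_zero, ← intervalIntegral.integral_const_mul]
    refine integral_congr_ae (ae_of_all _ fun x hx ↦ ?_)
    rw [uIoc_of_le ha] at hx
    rw [reflect_of_neg (neg_neg_of_pos hx.1), neg_neg]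
  have hpos : ∫ x in 0..a, reflect σ f x = ∫ x in 0..a, f x :=
    integral_congr fun x hx ↦ reflect_of_nonneg (by rw [uIcc_of_le ha] at hx; exact hx.1)
  have h0 : (0 : ℝ) ∈ uIcc (-a) a := by
    rw [uIcc_of_le (by linarith)]
    exact ⟨by linarith, ha⟩
  rw [← integral_add_adjacent_intervals (hint.mono_set (uIcc_subset_uIcc left_mem_uIcc h0))
    (hint.mono_set (uIcc_subset_uIcc h0 right_mem_uIcc)), hneg, hpos]
  ring

theorem integral_sq_reflect (ha : 0 ≤ a) (hσ : σ ^ 2 = 1) (hf : ContinuousOn f (Icc 0 a)) :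
    ∫ x in -a..a, reflect σ f x ^ 2 = 2 * ∫ x in 0..a, f x ^ 2 := by
  simp_rw [reflect_sq, hσ]
  rw [integral_reflect ha (f := fun y ↦ f y ^ 2) (hf.pow 2)]
  ring

theorem integral_sq_le_of_reflect (ha : 0 < a) (hσ : σ ^ 2 = 1) (hg : ContinuousOn g (Icc 0 a))
    (hfg : ∀ x ∈ Icc 0 a, HasDerivWithinAt f (g x) (Icc 0 a) x)
    (h0 : σ * f 0 = f 0) (ha' : σ * f a = f a) (hmean : (σ + 1) * ∫ x in 0..a, f x = 0) :
    ∫ x in 0..a, f x ^ 2 ≤ (a / π) ^ 2 * ∫ x in 0..a, g x ^ 2 := by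
  have hf : ContinuousOn f (Icc 0 a) := fun x hx ↦ (hfg x hx).continuousWithinAt
  have h := integral_sq_le_of_hasDeriv_right (neg_lt_self ha) (continuousOn_reflect hf h0)
    (by rw [reflect_of_neg (neg_neg_of_pos ha), reflect_of_nonneg ha.le, neg_neg, ha'])
    (by rw [integral_reflect ha.le hf, hmean]) (fun x hx ↦ hasDerivWithinAt_reflect hfg hx)
    (memLp_reflect hg)
  rw [integral_sq_reflect ha.le hσ hf, integral_sq_reflect ha.le (by rw [neg_sq, hσ]) hg,
    sub_neg_eq_add, ← two_mul, mul_div_mul_left _ _ two_ne_zero] at h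
  linarith

end reflect

theorem integral_sq_le_of_boundary_eq_zero {f g : ℝ → ℝ} {a : ℝ} (ha : 0 < a)
    (hg : ContinuousOn g (Icc 0 a)) (hfg : ∀ x ∈ Icc 0 a, HasDerivWithinAt f (g x) (Icc 0 a) x)
    (h0 : f 0 = 0) (ha' : f a = 0) :
    ∫ x in 0..a, f x ^ 2 ≤ (a / π) ^ 2 * ∫ x in 0..a, g x ^ 2 :=
  integral_sq_le_of_reflect (σ := -1) ha (by norm_num) hg hfg (by simp [h0]) (by simp [ha'])
    (by norm_num)

theorem integral_sq_le_of_integral_eq_zero {f g : ℝ → ℝ} {a : ℝ} (ha : 0 < a)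
    (hg : ContinuousOn g (Icc 0 a)) (hfg : ∀ x ∈ Icc 0 a, HasDerivWithinAt f (g x) (Icc 0 a) x)
    (hmean : ∫ x in 0..a, f x = 0) :
    ∫ x in 0..a, f x ^ 2 ≤ (a / π) ^ 2 * ∫ x in 0..a, g x ^ 2 :=
  integral_sq_le_of_reflect (σ := 1) ha (by norm_num) hg hfg (one_mul _) (one_mul _)
    (by rw [hmean, mul_zero])

theorem integral_norm_sq_eq_sum {ι : Type*} [Fintype ι] {w : ℝ → EuclideanSpace ℝ ι}
    {a b : ℝ} (hw : ContinuousOn w (uIcc a b)) :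
    ∫ x in a..b, ‖w x‖ ^ 2 = ∑ j, ∫ x in a..b, w x j ^ 2 := by
  have hint (j : ι) : IntervalIntegrable (fun x ↦ w x j ^ 2) volume a b :=
    (((EuclideanSpace.proj j).continuous.comp_continuousOn hw).pow 2).intervalIntegrable
  rw [← integral_finsetSum fun j _ ↦ hint j]
  simp only [EuclideanSpace.norm_sq_eq, Real.norm_eq_abs, sq_abs]

theorem HasDerivWithinAt.euclideanSpace_apply {ι : Type*} [Fintype ι]
    {v : ℝ → EuclideanSpace ℝ ι} {v' : EuclideanSpace ℝ ι} {s : Set ℝ} {x : ℝ}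
    (h : HasDerivWithinAt v v' s x) (j : ι) : HasDerivWithinAt (fun y ↦ v y j) (v' j) s x :=
  (EuclideanSpace.proj (𝕜 := ℝ) j).hasFDerivAt.comp_hasDerivWithinAt x h

theorem stmt_8_general (n k : ℕ)
    (v : ℝ → EuclideanSpace ℝ (Fin n))
    (hv : ContDiffOn ℝ 2 v (Set.Icc 0 Real.pi))
    (hDir : ∀ j : Fin n, k ≤ (j : ℕ) → v 0 j = 0 ∧ v Real.pi j = 0)
    (hNeu : ∀ j : Fin n, (j : ℕ) < k →
      derivWithin v (Set.Icc 0 Real.pi) 0 j = 0 ∧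
      derivWithin v (Set.Icc 0 Real.pi) Real.pi j = 0) :
    (∫ θ in (0 : ℝ)..Real.pi, ‖derivWithin v (Set.Icc 0 Real.pi) θ‖ ^ 2) ≤
      ∫ θ in (0 : ℝ)..Real.pi,
        ‖derivWithin (derivWithin v (Set.Icc 0 Real.pi)) (Set.Icc 0 Real.pi) θ‖ ^ 2 := by
  set S := Icc 0 π
  have hS : UniqueDiffOn ℝ S := uniqueDiffOn_Icc pi_pos
  have hv' : ContDiffOn ℝ 1 (derivWithin v S) S := hv.derivWithin hS (by norm_num)
  have hv'' : ContinuousOn (derivWithin (derivWithin v S) S) S :=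
    hv'.continuousOn_derivWithin hS le_rfl
  rw [integral_norm_sq_eq_sum (by rw [uIcc_of_le pi_pos.le]; exact hv'.continuousOn),
    integral_norm_sq_eq_sum (by rw [uIcc_of_le pi_pos.le]; exact hv'')]
  refine Finset.sum_le_sum fun j _ ↦ ?_
  refine le_of_le_of_eq (b := (π / π) ^ 2 * _) ?_ (by rw [div_self pi_ne_zero, one_pow, one_mul])
  have hdv' (x) (hx : x ∈ S) :=
    (hv'.differentiableOn one_ne_zero x hx).hasDerivWithinAt.euclideanSpace_apply j
  have hg : ContinuousOn (fun x ↦ derivWithin (derivWithin v S) S x j) S :=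
    (EuclideanSpace.proj j).continuous.comp_continuousOn hv''
  rcases lt_or_ge (j : ℕ) k with hjk | hjk
  · exact integral_sq_le_of_boundary_eq_zero pi_pos hg hdv' (hNeu j hjk).1 (hNeu j hjk).2
  refine integral_sq_le_of_integral_eq_zero pi_pos hg hdv' ?_
  have hdv (x) (hx : x ∈ Ioo 0 π) :=
    ((hv.differentiableOn two_ne_zero x (Ioo_subset_Icc_self hx)).hasDerivWithinAt
      |>.euclideanSpace_apply j).mono_of_mem_nhdsWithin (Icc_mem_nhdsGT_of_mem ⟨hx.1.le, hx.2⟩)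
  have hw : ContinuousOn (fun x ↦ derivWithin v S x j) (uIcc 0 π) := by
    rw [uIcc_of_le pi_pos.le]
    exact (EuclideanSpace.proj j).continuous.comp_continuousOn hv'.continuousOn
  rw [integral_eq_sub_of_hasDeriv_right_of_le (f := fun x ↦ v x j) pi_pos.le
    ((EuclideanSpace.proj j).continuous.comp_continuousOn hv.continuousOn) hdv
    hw.intervalIntegrable, (hDir j hjk).1, (hDir j hjk).2, sub_zero]

/-- Second-order Wirtinger inequality under mixed Dirichlet–Neumann boundary conditions
(the Euclidean version of inequality (E) in the proof of Lemma 8.1): if `v : [0,π] → ℝⁿ` is `C²`,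
its last `n − k` components vanish at `0` and `π`, and the derivatives of its first `k` components
vanish at `0` and `π`, then `∫_0^π |v'|² ≤ ∫_0^π |v''|²`. -/
theorem stmt_8 (n k : ℕ) (hk : k ≤ n)
    (v : ℝ → EuclideanSpace ℝ (Fin n))
    (hv : ContDiffOn ℝ 2 v (Set.Icc 0 Real.pi))
    (hDir : ∀ j : Fin n, k ≤ (j : ℕ) → v 0 j = 0 ∧ v Real.pi j = 0)
    (hNeu : ∀ j : Fin n, (j : ℕ) < k →
      derivWithin v (Set.Icc 0 Real.pi) 0 j = 0 ∧
      derivWithin v (Set.Icc 0 Real.pi) Real.pi j = 0) :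
    (∫ θ in (0 : ℝ)..Real.pi, ‖derivWithin v (Set.Icc 0 Real.pi) θ‖ ^ 2) ≤
      ∫ θ in (0 : ℝ)..Real.pi,
        ‖derivWithin (derivWithin v (Set.Icc 0 Real.pi)) (Set.Icc 0 Real.pi) θ‖ ^ 2 :=
  stmt_8_general n k v hv hDir hNeu
end

section
/- Let l > 0 and let 0 ≤ k ≤ n be integers. Let u : [−2l, 2l] × [0, π] → ℝⁿ be smooth on the closed half cylinder, harmonic (∂_t²u + ∂_θ²u = 0 componentwise), and satisfy the Euclidean free boundary conditions relative to ℝᵏ ⊂ ℝⁿ (for θ ∈ {0, π}: u^{k+1} = ⋯ = uⁿ = 0 and ∂_θ u¹ = ⋯ = ∂_θ uᵏ = 0). Then for every t ∈ [−2l, 2l], ∫_0^π (|∂_t u(t, θ)|² + |∂_θ u(t, θ)|²) dθ ≤ 2 ∫_0^π |∂_θ u(t, θ)|² dθ + (1/(4l)) ∫_{−2l}^{2l} ∫_0^π (|∂_t u|² + |∂_θ u|²) dθ dt. (Slice energy bound, derived in the proof of Theorem 8.3 from the constancy of ∫(|u_t|² − |u_θ|²).) -/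
open MeasureTheory Set intervalIntegral
open scoped ContDiff RealInnerProductSpace

variable {E : Type*} [NormedAddCommGroup E] [InnerProductSpace ℝ E]

noncomputable def aDt (u : ℝ × ℝ → E) : ℝ × ℝ → E :=
  fun q => fderiv ℝ u q ((1:ℝ), (0:ℝ))

noncomputable def aDth (u : ℝ × ℝ → E) : ℝ × ℝ → E :=
  fun q => fderiv ℝ u q ((0:ℝ), (1:ℝ))

noncomputable def eFun (u : ℝ × ℝ → E) : ℝ × ℝ → ℝ :=
  fun p => ‖aDt u p‖ ^ 2 + ‖aDth u p‖ ^ 2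

noncomputable def iFun (u : ℝ × ℝ → E) : ℝ × ℝ → ℝ :=
  fun p => ‖aDt u p‖ ^ 2 - ‖aDth u p‖ ^ 2

noncomputable def gFun (u : ℝ × ℝ → E) : ℝ × ℝ → ℝ :=
  fun p => ⟪aDt u p, aDth u p⟫

noncomputable def FpFun (u : ℝ × ℝ → E) : ℝ × ℝ → ℝ :=
  fun p => (⟪aDt u p, aDt (aDt u) p⟫ + ⟪aDt (aDt u) p, aDt u p⟫)
    - (⟪aDth u p, aDt (aDth u) p⟫ + ⟪aDt (aDth u) p, aDth u p⟫)

noncomputable def ddFun (u : ℝ × ℝ → E) : ℝ × ℝ → ℝ :=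
  fun p => ⟪aDt u p, aDth (aDth u) p⟫ + ⟪aDth (aDt u) p, aDth u p⟫

noncomputable def fFun (u : ℝ × ℝ → E) : ℝ → ℝ :=
  fun x => ∫ θ in (0:ℝ)..Real.pi, iFun u (x, θ)

section aux

variable {u : ℝ × ℝ → E} {U : Set (ℝ × ℝ)}

lemma aux_cd_fderiv_apply (hU : IsOpen U) (hu : ContDiffOn ℝ ∞ u U) (v : ℝ × ℝ) :
    ContDiffOn ℝ ∞ (fun q => fderiv ℝ u q v) U :=
  (hu.fderiv_of_isOpen hU (by simp)).clm_apply contDiffOn_const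

lemma aux_diffAt {F : Type*} [NormedAddCommGroup F] [NormedSpace ℝ F] {w : ℝ × ℝ → F}
    (hU : IsOpen U) (hw : ContDiffOn ℝ ∞ w U)
    {q : ℝ × ℝ} (hq : q ∈ U) : DifferentiableAt ℝ w q :=
  ((hw.differentiableOn (by simp)) q hq).differentiableAt (hU.mem_nhds hq)

lemma aux_cd_aDt (hU : IsOpen U) (hu : ContDiffOn ℝ ∞ u U) :
    ContDiffOn ℝ ∞ (aDt u) U := aux_cd_fderiv_apply hU hu _

lemma aux_cd_aDth (hU : IsOpen U) (hu : ContDiffOn ℝ ∞ u U) :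
    ContDiffOn ℝ ∞ (aDth u) U := aux_cd_fderiv_apply hU hu _

lemma aux_slice_t {w : ℝ × ℝ → E} {x θ : ℝ} (hw : DifferentiableAt ℝ w (x, θ)) :
    HasDerivAt (fun s => w (s, θ)) (aDt w (x, θ)) x :=
  hw.hasFDerivAt.comp_hasDerivAt x ((hasDerivAt_id x).prodMk (hasDerivAt_const x θ))

lemma aux_slice_th {w : ℝ × ℝ → E} {x θ : ℝ} (hw : DifferentiableAt ℝ w (x, θ)) :
    HasDerivAt (fun τ => w (x, τ)) (aDth w (x, θ)) θ :=
  hw.hasFDerivAt.comp_hasDerivAt θ ((hasDerivAt_const θ x).prodMk (hasDerivAt_id θ))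

lemma aux_symm (hU : IsOpen U) (hu : ContDiffOn ℝ ∞ u U) {q : ℝ × ℝ} (hq : q ∈ U) :
    aDth (aDt u) q = aDt (aDth u) q := by
  have hf' : ContDiffOn ℝ ∞ (fderiv ℝ u) U := hu.fderiv_of_isOpen hU (by simp)
  have hd : DifferentiableAt ℝ (fderiv ℝ u) q := aux_diffAt hU hf' hq
  have hev : ∀ᶠ y in nhds q, HasFDerivAt u (fderiv ℝ u y) y := by
    filter_upwards [hU.mem_nhds hq] with y hy
    exact (aux_diffAt hU hu hy).hasFDerivAt
  have hsym := second_derivative_symmetric_of_eventually hev hd.hasFDerivAt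
    ((0:ℝ), (1:ℝ)) ((1:ℝ), (0:ℝ))
  have h1 : aDth (aDt u) q = fderiv ℝ (fderiv ℝ u) q ((0:ℝ),(1:ℝ)) ((1:ℝ),(0:ℝ)) := by
    show fderiv ℝ (fun p => fderiv ℝ u p ((1:ℝ),(0:ℝ))) q ((0:ℝ),(1:ℝ)) = _
    rw [fderiv_clm_apply hd (differentiableAt_const _)]
    simp
  have h2 : aDt (aDth u) q = fderiv ℝ (fderiv ℝ u) q ((1:ℝ),(0:ℝ)) ((0:ℝ),(1:ℝ)) := by
    show fderiv ℝ (fun p => fderiv ℝ u p ((0:ℝ),(1:ℝ))) q ((1:ℝ),(0:ℝ)) = _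
    rw [fderiv_clm_apply hd (differentiableAt_const _)]
    simp
  rw [h1, h2]
  exact hsym

lemma aux_cont_iFun (hU : IsOpen U) (hu : ContDiffOn ℝ ∞ u U) :
    ContinuousOn (iFun u) U := by
  have h1 := (aux_cd_aDt hU hu).continuousOn
  have h2 := (aux_cd_aDth hU hu).continuousOn
  exact ((h1.norm.pow 2).sub (h2.norm.pow 2))

lemma aux_cont_eFun (hU : IsOpen U) (hu : ContDiffOn ℝ ∞ u U) :
    ContinuousOn (eFun u) U := by
  have h1 := (aux_cd_aDt hU hu).continuousOn
  have h2 := (aux_cd_aDth hU hu).continuousOn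
  exact ((h1.norm.pow 2).add (h2.norm.pow 2))

lemma aux_cont_FpFun (hU : IsOpen U) (hu : ContDiffOn ℝ ∞ u U) :
    ContinuousOn (FpFun u) U := by
  have h1 := (aux_cd_aDt hU hu).continuousOn
  have h2 := (aux_cd_aDth hU hu).continuousOn
  have h3 := (aux_cd_aDt hU (aux_cd_aDt hU hu)).continuousOn
  have h4 := (aux_cd_aDt hU (aux_cd_aDth hU hu)).continuousOn
  exact ((h1.inner h3).add (h3.inner h1)).sub ((h2.inner h4).add (h4.inner h2))

lemma aux_cont_ddFun (hU : IsOpen U) (hu : ContDiffOn ℝ ∞ u U) :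
    ContinuousOn (ddFun u) U := by
  have h1 := (aux_cd_aDt hU hu).continuousOn
  have h2 := (aux_cd_aDth hU hu).continuousOn
  have h3 := (aux_cd_aDth hU (aux_cd_aDth hU hu)).continuousOn
  have h4 := (aux_cd_aDth hU (aux_cd_aDt hU hu)).continuousOn
  exact (h1.inner h3).add (h4.inner h2)

lemma aux_slice_cont {F : Type*} [NormedAddCommGroup F] {w : ℝ × ℝ → F}
    (hw : ContinuousOn w U) {x : ℝ} {s : Set ℝ} (h : ∀ θ ∈ s, (x, θ) ∈ U) :
    ContinuousOn (fun θ => w (x, θ)) s :=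
  hw.comp ((continuous_const.prodMk continuous_id).continuousOn) h

lemma aux_slice_cont_t {F : Type*} [NormedAddCommGroup F] {w : ℝ × ℝ → F}
    (hw : ContinuousOn w U) {θ : ℝ} {s : Set ℝ} (h : ∀ x ∈ s, (x, θ) ∈ U) :
    ContinuousOn (fun x => w (x, θ)) s :=
  hw.comp ((continuous_id.prodMk continuous_const).continuousOn) h

lemma aux_clamp {a b d x : ℝ} (hab : a ≤ b) (hd : 0 ≤ d) (hx : x ∈ Icc (a - d) (b + d)) :
    max a (min x b) ∈ Icc a b ∧ |x - max a (min x b)| ≤ d := by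
  obtain ⟨h1, h2⟩ := hx
  refine ⟨⟨le_max_left _ _, max_le hab (min_le_right _ _)⟩, ?_⟩
  rcases le_total x a with h | h
  · rw [min_eq_left (h.trans hab), max_eq_left h]
    rw [abs_le]; constructor <;> linarith
  · rcases le_total x b with h' | h'
    · rw [min_eq_left h', max_eq_right h]
      simpa using hd
    · rw [min_eq_right h', max_eq_right hab]
      rw [abs_le]; constructor <;> linarith

end aux

/-- Slice energy bound (from the proof of Theorem 8.3): if `u` is smooth on the closed half
cylinder `[−2l, 2l] × [0, π]`, harmonic, and satisfies the Euclidean free boundary conditions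
relative to `ℝᵏ ⊂ ℝⁿ`, then for every `t ∈ [−2l, 2l]`,
`∫_0^π (|∂_t u|² + |∂_θ u|²) dθ ≤ 2 ∫_0^π |∂_θ u|² dθ + (1/(4l)) ∫_{C_{−2l,2l}} |∇u|²`. -/
theorem stmt_10 (l : ℝ) (hl : 0 < l) (n k : ℕ) (hk : k ≤ n)
    (u : ℝ × ℝ → EuclideanSpace ℝ (Fin n))
    (U : Set (ℝ × ℝ)) (hU : IsOpen U)
    (hUc : Set.Icc (-(2 * l)) (2 * l) ×ˢ Set.Icc 0 Real.pi ⊆ U)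
    (hu : ContDiffOn ℝ (⊤ : ℕ∞) u U)
    (harm : ∀ p ∈ Set.Icc (-(2 * l)) (2 * l) ×ˢ Set.Icc 0 Real.pi,
      fderiv ℝ (fun q => fderiv ℝ u q ((1 : ℝ), (0 : ℝ))) p ((1 : ℝ), (0 : ℝ))
        + fderiv ℝ (fun q => fderiv ℝ u q ((0 : ℝ), (1 : ℝ))) p ((0 : ℝ), (1 : ℝ)) = 0)
    (hbd : ∀ t ∈ Set.Icc (-(2 * l)) (2 * l), ∀ θ ∈ ({0, Real.pi} : Set ℝ), ∀ j : Fin n,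
      (k ≤ (j : ℕ) → u (t, θ) j = 0) ∧
      ((j : ℕ) < k → fderiv ℝ u (t, θ) ((0 : ℝ), (1 : ℝ)) j = 0)) :
    ∀ t ∈ Set.Icc (-(2 * l)) (2 * l),
      (∫ θ in (0 : ℝ)..Real.pi,
          (‖fderiv ℝ u (t, θ) ((1 : ℝ), (0 : ℝ))‖ ^ 2
            + ‖fderiv ℝ u (t, θ) ((0 : ℝ), (1 : ℝ))‖ ^ 2)) ≤
        2 * (∫ θ in (0 : ℝ)..Real.pi, ‖fderiv ℝ u (t, θ) ((0 : ℝ), (1 : ℝ))‖ ^ 2) +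
          (1 / (4 * l)) * ∫ s in (-(2 * l))..(2 * l), ∫ θ in (0 : ℝ)..Real.pi,
            (‖fderiv ℝ u (s, θ) ((1 : ℝ), (0 : ℝ))‖ ^ 2
              + ‖fderiv ℝ u (s, θ) ((0 : ℝ), (1 : ℝ))‖ ^ 2) := by
  have hpi0 : (0:ℝ) ≤ Real.pi := Real.pi_pos.le
  have h2l : -(2*l) < 2*l := by linarith
  have hu' : ContDiffOn ℝ ∞ u U := hu.of_le (by simp)
  set a := -(2 * l) with ha
  set b := 2 * l with hb
  have hKU : ∀ x ∈ Icc a b, ∀ θ ∈ Icc (0:ℝ) Real.pi, (x, θ) ∈ U :=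
    fun x hx θ hθ => hUc ⟨hx, hθ⟩
  obtain ⟨δ, δpos, hδ⟩ := (((isCompact_Icc).prod isCompact_Icc) :
      IsCompact (Icc a b ×ˢ Icc (0:ℝ) Real.pi)).exists_thickening_subset_open hU hUc
  have hK'U : ∀ p ∈ Icc (a - δ/2) (b + δ/2) ×ˢ Icc (0 - δ/2) (Real.pi + δ/2), p ∈ U := by
    rintro ⟨x, θ⟩ ⟨hx, hθ⟩
    apply hδ
    rw [Metric.mem_thickening_iff]
    obtain ⟨hm1, hd1⟩ := aux_clamp h2l.le (by linarith : (0:ℝ) ≤ δ/2) hx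
    obtain ⟨hm2, hd2⟩ := aux_clamp hpi0 (by linarith : (0:ℝ) ≤ δ/2) hθ
    refine ⟨(max a (min x b), max 0 (min θ Real.pi)), ⟨hm1, hm2⟩, ?_⟩
    rw [Prod.dist_eq]
    have e1 : dist x (max a (min x b)) ≤ δ/2 := by rw [Real.dist_eq]; exact hd1
    have e2 : dist θ (max 0 (min θ Real.pi)) ≤ δ/2 := by rw [Real.dist_eq]; exact hd2
    exact max_lt (by linarith) (by linarith)
  have hballK' : ∀ t ∈ Icc a b, ∀ x ∈ Metric.ball t (δ/2), ∀ θ ∈ Icc (0:ℝ) Real.pi,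
      (x, θ) ∈ Icc (a - δ/2) (b + δ/2) ×ˢ Icc (0 - δ/2) (Real.pi + δ/2) := by
    intro t ht x hx θ hθ
    have hd := abs_lt.1 (by simpa [Real.dist_eq] using hx)
    exact ⟨⟨by linarith [ht.1], by linarith [ht.2]⟩, ⟨by linarith [hθ.1], by linarith [hθ.2]⟩⟩
  have hballU : ∀ t ∈ Icc a b, ∀ x ∈ Metric.ball t (δ/2), ∀ θ ∈ Icc (0:ℝ) Real.pi,
      (x, θ) ∈ U := fun t ht x hx θ hθ => hK'U _ (hballK' t ht x hx θ hθ)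
  have hK'c : IsCompact (Icc (a - δ/2) (b + δ/2) ×ˢ Icc (0 - δ/2) (Real.pi + δ/2)) :=
    isCompact_Icc.prod isCompact_Icc
  obtain ⟨Mp, hMp⟩ := hK'c.exists_bound_of_continuousOn ((aux_cont_FpFun hU hu').mono hK'U)
  obtain ⟨Me, hMe⟩ := hK'c.exists_bound_of_continuousOn ((aux_cont_eFun hU hu').mono hK'U)
  -- derivative of the energy-difference function
  have hF : ∀ t ∈ Icc a b, HasDerivAt (fFun u) (∫ θ in (0:ℝ)..Real.pi, FpFun u (t, θ)) t := by
    intro t ht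
    refine (intervalIntegral.hasDerivAt_integral_of_dominated_loc_of_deriv_le
      (F := fun x θ => iFun u (x, θ)) (F' := fun x θ => FpFun u (x, θ))
      (bound := fun _ => Mp) (Metric.ball_mem_nhds t (half_pos δpos)) ?_ ?_ ?_ ?_ ?_ ?_).2
    · filter_upwards [Metric.ball_mem_nhds t (half_pos δpos)] with x hx
      rw [uIoc_of_le hpi0]
      exact (((aux_slice_cont (aux_cont_iFun hU hu') (hballU t ht x hx)).mono
        Ioc_subset_Icc_self).aestronglyMeasurable measurableSet_Ioc)
    · apply ContinuousOn.intervalIntegrable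
      rw [uIcc_of_le hpi0]
      exact aux_slice_cont (aux_cont_iFun hU hu') (hKU t ht)
    · rw [uIoc_of_le hpi0]
      exact (((aux_slice_cont (aux_cont_FpFun hU hu') (hKU t ht)).mono
        Ioc_subset_Icc_self).aestronglyMeasurable measurableSet_Ioc)
    · refine Filter.Eventually.of_forall fun θ hθ x hx => hMp _ ?_
      rw [uIoc_of_le hpi0] at hθ
      exact hballK' t ht x hx θ (Ioc_subset_Icc_self hθ)
    · exact intervalIntegrable_const
    · refine Filter.Eventually.of_forall fun θ hθ x hx => ?_
      rw [uIoc_of_le hpi0] at hθ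
      have hq : (x, θ) ∈ U := hballU t ht x hx θ (Ioc_subset_Icc_self hθ)
      have h1 : HasDerivAt (fun s => aDt u (s, θ)) (aDt (aDt u) (x, θ)) x :=
        aux_slice_t (aux_diffAt hU (aux_cd_aDt hU hu') hq)
      have h2 : HasDerivAt (fun s => aDth u (s, θ)) (aDt (aDth u) (x, θ)) x :=
        aux_slice_t (aux_diffAt hU (aux_cd_aDth hU hu') hq)
      have h3 := (h1.inner ℝ h1).sub (h2.inner ℝ h2)
      simpa only [iFun, FpFun, real_inner_self_eq_norm_sq, Pi.sub_def] using h3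
  -- boundary terms vanish
  have hbzero : ∀ t ∈ Icc a b, ∀ θ0 ∈ ({0, Real.pi} : Set ℝ), gFun u (t, θ0) = 0 := by
    intro t ht θ0 hθ0
    have hθIcc : θ0 ∈ Icc (0:ℝ) Real.pi := by
      rcases hθ0 with h | h
      · rw [h]; exact ⟨le_refl 0, hpi0⟩
      · rw [h]; exact ⟨hpi0, le_refl _⟩
    have hq : (t, θ0) ∈ U := hKU t ht θ0 hθIcc
    show ⟪aDt u (t, θ0), aDth u (t, θ0)⟫ = 0
    rw [PiLp.inner_apply]
    apply Finset.sum_eq_zero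
    intro j _
    rcases lt_or_ge (j : ℕ) k with hj | hj
    · have hz : aDth u (t, θ0) j = 0 := (hbd t ht θ0 hθ0 j).2 hj
      simp [RCLike.inner_apply, hz]
    · have hbase : HasDerivAt (fun s => u (s, θ0)) (aDt u (t, θ0)) t :=
        aux_slice_t (aux_diffAt hU hu' hq)
      have hgd : HasDerivAt (fun s => u (s, θ0) j) (aDt u (t, θ0) j) t := by
        have := (EuclideanSpace.proj j).hasFDerivAt.comp_hasDerivAt t hbase
        simpa [PiLp.proj_apply, Function.comp_def] using this
      have hzon : ∀ s ∈ Icc a b, u (s, θ0) j = 0 := fun s hs => (hbd s hs θ0 hθ0 j).1 hj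
      have h2 : HasDerivWithinAt (fun s => u (s, θ0) j) 0 (Icc a b) t :=
        (hasDerivWithinAt_const t _ 0).congr hzon (hzon t ht)
      have huniq := (uniqueDiffOn_Icc h2l) t ht
      have hz : aDt u (t, θ0) j = 0 := by
        rw [← hgd.hasDerivWithinAt.derivWithin huniq]
        exact h2.derivWithin huniq
      simp [RCLike.inner_apply, hz]
  -- the derivative integrates to zero
  have hzero : ∀ t ∈ Icc a b, (∫ θ in (0:ℝ)..Real.pi, FpFun u (t, θ)) = 0 := by
    intro t ht
    have hsliceU : ∀ θ ∈ Icc (0:ℝ) Real.pi, (t, θ) ∈ U := hKU t ht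
    have hg : ∀ θ ∈ uIcc (0:ℝ) Real.pi, HasDerivAt (fun τ => gFun u (t, τ)) (ddFun u (t, θ)) θ := by
      intro θ hθ
      rw [uIcc_of_le hpi0] at hθ
      have hq := hsliceU θ hθ
      have h1 : HasDerivAt (fun τ => aDt u (t, τ)) (aDth (aDt u) (t, θ)) θ :=
        aux_slice_th (aux_diffAt hU (aux_cd_aDt hU hu') hq)
      have h2 : HasDerivAt (fun τ => aDth u (t, τ)) (aDth (aDth u) (t, θ)) θ :=
        aux_slice_th (aux_diffAt hU (aux_cd_aDth hU hu') hq)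
      exact h1.inner ℝ h2
    have hdd_int : IntervalIntegrable (fun θ => ddFun u (t, θ)) volume 0 Real.pi := by
      apply ContinuousOn.intervalIntegrable
      rw [uIcc_of_le hpi0]
      exact aux_slice_cont (aux_cont_ddFun hU hu') hsliceU
    have hFTC := intervalIntegral.integral_eq_sub_of_hasDerivAt hg hdd_int
    have hp0 : gFun u (t, Real.pi) = 0 := hbzero t ht Real.pi (by simp)
    have h00 : gFun u (t, 0) = 0 := hbzero t ht 0 (by simp)
    have hrel : EqOn (fun θ => FpFun u (t, θ)) (fun θ => (-2 : ℝ) * ddFun u (t, θ))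
        (uIcc (0:ℝ) Real.pi) := by
      intro θ hθ
      rw [uIcc_of_le hpi0] at hθ
      have hq := hsliceU θ hθ
      have hsym := aux_symm hU hu' hq
      have hharm : aDt (aDt u) (t, θ) + aDth (aDth u) (t, θ) = 0 := harm (t, θ) ⟨ht, hθ⟩
      have hneg : aDth (aDth u) (t, θ) = -aDt (aDt u) (t, θ) := eq_neg_of_add_eq_zero_right hharm
      show FpFun u (t, θ) = -2 * ddFun u (t, θ)
      simp only [FpFun, ddFun, hneg, ← hsym, inner_neg_right]
      rw [real_inner_comm (aDt (aDt u) (t, θ)) (aDt u (t, θ)),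
        real_inner_comm (aDth u (t, θ)) (aDth (aDt u) (t, θ))]
      ring
    calc (∫ θ in (0:ℝ)..Real.pi, FpFun u (t, θ))
        = ∫ θ in (0:ℝ)..Real.pi, (-2 : ℝ) * ddFun u (t, θ) := intervalIntegral.integral_congr hrel
      _ = (-2 : ℝ) * ∫ θ in (0:ℝ)..Real.pi, ddFun u (t, θ) := intervalIntegral.integral_const_mul _ _
      _ = 0 := by rw [hFTC, hp0, h00]; ring
  -- f is constant
  have hconst : ∀ t ∈ Icc a b, fFun u t = fFun u a := by
    intro t ht
    have hcont : ContinuousOn (fFun u) (Icc a b) :=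
      fun s hs => ((hF s hs).continuousAt).continuousWithinAt
    have hder : ∀ x ∈ Ico a b, HasDerivWithinAt (fFun u) 0 (Ici x) x := by
      intro x hx
      have h := (hF x (Ico_subset_Icc_self hx)).hasDerivWithinAt (s := Ici x)
      rwa [hzero x (Ico_subset_Icc_self hx)] at h
    exact constant_of_has_deriv_right_zero hcont hder t ht
  -- continuity and integrability of the slice energy
  have hEslc : ContinuousOn (fun s => ∫ θ in Ioc (0:ℝ) Real.pi, eFun u (s, θ)) (Icc a b) := by
    intro t ht
    apply ContinuousAt.continuousWithinAt
    apply MeasureTheory.continuousAt_of_dominated (bound := fun _ => Me)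
    · filter_upwards [Metric.ball_mem_nhds t (half_pos δpos)] with x hx
      exact ((aux_slice_cont (aux_cont_eFun hU hu') (hballU t ht x hx)).mono
        Ioc_subset_Icc_self).aestronglyMeasurable measurableSet_Ioc
    · filter_upwards [Metric.ball_mem_nhds t (half_pos δpos)] with x hx
      rw [ae_restrict_iff' measurableSet_Ioc]
      exact .of_forall fun θ hθ => hMe _ (hballK' t ht x hx θ (Ioc_subset_Icc_self hθ))
    · exact (integrableOn_const_iff).2 (Or.inr measure_Ioc_lt_top)
    · rw [ae_restrict_iff' measurableSet_Ioc]
      refine .of_forall fun θ hθ => ?_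
      have hq : (t, θ) ∈ U := hKU t ht θ (Ioc_subset_Icc_self hθ)
      have hic : ContinuousAt (fun x : ℝ => (x, θ)) t :=
        (continuous_id.prodMk continuous_const).continuousAt
      show ContinuousAt ((eFun u) ∘ (fun x : ℝ => (x, θ))) t
      exact ContinuousAt.comp ((aux_cont_eFun hU hu').continuousAt (hU.mem_nhds hq)) hic
  have hEint : IntervalIntegrable (fun s => ∫ θ in Ioc (0:ℝ) Real.pi, eFun u (s, θ)) volume a b := by
    apply ContinuousOn.intervalIntegrable
    rw [uIcc_of_le h2l.le]
    exact hEslc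
  -- assembly
  intro t ht
  have e1 : ∀ p : ℝ × ℝ, fderiv ℝ u p ((1:ℝ), (0:ℝ)) = aDt u p := fun _ => rfl
  have e2 : ∀ p : ℝ × ℝ, fderiv ℝ u p ((0:ℝ), (1:ℝ)) = aDth u p := fun _ => rfl
  simp only [e1, e2]
  have hsliceU : ∀ θ ∈ Icc (0:ℝ) Real.pi, (t, θ) ∈ U := hKU t ht
  have hi1 : IntervalIntegrable (fun θ => ‖aDt u (t, θ)‖ ^ 2) volume 0 Real.pi := by
    apply ContinuousOn.intervalIntegrable
    rw [uIcc_of_le hpi0]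
    exact (aux_slice_cont (aux_cd_aDt hU hu').continuousOn hsliceU).norm.pow 2
  have hi2 : IntervalIntegrable (fun θ => ‖aDth u (t, θ)‖ ^ 2) volume 0 Real.pi := by
    apply ContinuousOn.intervalIntegrable
    rw [uIcc_of_le hpi0]
    exact (aux_slice_cont (aux_cd_aDth hU hu').continuousOn hsliceU).norm.pow 2
  have hsplit : (∫ θ in (0:ℝ)..Real.pi, (‖aDt u (t, θ)‖ ^ 2 + ‖aDth u (t, θ)‖ ^ 2))
      = fFun u t + 2 * ∫ θ in (0:ℝ)..Real.pi, ‖aDth u (t, θ)‖ ^ 2 := by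
    have hadd := intervalIntegral.integral_add hi1 hi2
    have hsub := intervalIntegral.integral_sub hi1 hi2
    have hff : fFun u t = ∫ θ in (0:ℝ)..Real.pi, (‖aDt u (t, θ)‖ ^ 2 - ‖aDth u (t, θ)‖ ^ 2) := rfl
    rw [hadd, hff, hsub]; ring
  have hmono2 : ∀ s ∈ Icc a b, fFun u s ≤ ∫ θ in Ioc (0:ℝ) Real.pi, eFun u (s, θ) := by
    intro s hs
    rw [← intervalIntegral.integral_of_le hpi0]
    have hsl : ∀ θ ∈ Icc (0:ℝ) Real.pi, (s, θ) ∈ U := hKU s hs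
    have hj1 : IntervalIntegrable (fun θ => ‖aDt u (s, θ)‖ ^ 2) volume 0 Real.pi := by
      apply ContinuousOn.intervalIntegrable
      rw [uIcc_of_le hpi0]
      exact (aux_slice_cont (aux_cd_aDt hU hu').continuousOn hsl).norm.pow 2
    have hj2 : IntervalIntegrable (fun θ => ‖aDth u (s, θ)‖ ^ 2) volume 0 Real.pi := by
      apply ContinuousOn.intervalIntegrable
      rw [uIcc_of_le hpi0]
      exact (aux_slice_cont (aux_cd_aDth hU hu').continuousOn hsl).norm.pow 2
    apply intervalIntegral.integral_mono_on hpi0 (hj1.sub hj2) (hj1.add hj2)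
    intro θ hθ
    show iFun u (s, θ) ≤ eFun u (s, θ)
    simp only [iFun, eFun]
    nlinarith [sq_nonneg ‖aDth u (s, θ)‖]
  have hkey : fFun u t * (4 * l) ≤ ∫ s in a..b, ∫ θ in Ioc (0:ℝ) Real.pi, eFun u (s, θ) := by
    have hba : b - a = 4 * l := by rw [ha, hb]; ring
    have h1 : (∫ _ in a..b, fFun u t) = fFun u t * (4 * l) := by
      rw [intervalIntegral.integral_const, hba, smul_eq_mul]; ring
    rw [← h1]
    apply intervalIntegral.integral_mono_on h2l.le intervalIntegrable_const hEint
    intro s hs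
    calc fFun u t = fFun u s := by rw [hconst t ht, hconst s hs]
      _ ≤ _ := hmono2 s hs
  have h4 : (0:ℝ) < 4 * l := by linarith
  have hkey2 : fFun u t ≤ (1 / (4 * l)) * ∫ s in a..b, ∫ θ in Ioc (0:ℝ) Real.pi, eFun u (s, θ) := by
    have hmul := mul_le_mul_of_nonneg_left hkey (le_of_lt (by positivity : (0:ℝ) < 1 / (4 * l)))
    calc fFun u t = (1 / (4 * l)) * (fFun u t * (4 * l)) := by field_simp
      _ ≤ _ := hmul
  have hgg : (∫ s in a..b, ∫ θ in (0:ℝ)..Real.pi, (‖aDt u (s, θ)‖ ^ 2 + ‖aDth u (s, θ)‖ ^ 2))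
      = ∫ s in a..b, ∫ θ in Ioc (0:ℝ) Real.pi, eFun u (s, θ) := by
    apply intervalIntegral.integral_congr
    intro s hs
    show (∫ θ in (0:ℝ)..Real.pi, (‖aDt u (s, θ)‖ ^ 2 + ‖aDth u (s, θ)‖ ^ 2))
      = ∫ θ in Ioc (0:ℝ) Real.pi, eFun u (s, θ)
    rw [intervalIntegral.integral_of_le hpi0]
    rfl
  rw [hsplit, hgg]
  linarith [hkey2]
end
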